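/- arXiv:2410.21226 — 7 statements merged into one kernel-verified Lean document; each statement's English description precedes it below -/
import Mathlib

section
/- Let G = (V,E) be a connected simple graph, M ∈ 𝓜(G), and x ∈ ker(M). If the subgraph of G induced by supp(x) is disconnected, then every connected component of G[supp(x)] is entirely contained in supp₊(x) or entirely contained in supp₋(x); that is, each connected component of G[supp(x)] is a connected component of G[supp₊(x)] or of G[supp₋(x)]. -/
open Matrix

open scoped Classical in
/-- `M ∈ 𝓜(G)`: `M` is a real symmetric matrix with `M u v < 0` for edges `uv`,
`M u v = 0` for distinct non-adjacent `u, v` (diagonal unconstrained),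
and `M` has exactly one negative eigenvalue (counted with multiplicity). -/
def InMG {V : Type*} [Fintype V] [DecidableEq V] (G : SimpleGraph V)
    (M : Matrix V V ℝ) : Prop :=
  M.IsSymm ∧
  (∀ u v, G.Adj u v → M u v < 0) ∧
  (∀ u v, u ≠ v → ¬G.Adj u v → M u v = 0) ∧
  ∃ hM : M.IsHermitian,
    (Finset.univ.filter fun i => hM.eigenvalues i < 0).card = 1

section Aux

open Finset

lemma CS.walk_boundary {V : Type*} {G : SimpleGraph V} (P : V → Prop) {a b : V}
    (w : G.Walk a b) : P a → ¬ P b →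
    ∃ u v, G.Adj u v ∧ P u ∧ ¬ P v ∧ G.Reachable a u := by
  induction w with
  | nil => intro ha hb; exact absurd ha hb
  | @cons a c b h p ih =>
      intro ha hb
      by_cases hc : P c
      · obtain ⟨u, v, h1, h2, h3, h4⟩ := ih hc hb
        exact ⟨u, v, h1, h2, h3, (h.reachable).trans h4⟩
      · exact ⟨a, c, h, ha, hc, SimpleGraph.Reachable.refl a⟩

lemma CS.dotProduct_sum' {V W : Type*} [Fintype V] [Fintype W] (v : V → ℝ) (f : W → V → ℝ) :
    v ⬝ᵥ (∑ i, f i) = ∑ i, v ⬝ᵥ f i := by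
  simp only [dotProduct, Finset.sum_apply, Finset.mul_sum]
  rw [Finset.sum_comm]

lemma CS.mulVec_sum' {V W : Type*} [Fintype V] [Fintype W] (M : Matrix V V ℝ) (f : W → V → ℝ) :
    M *ᵥ (∑ i, f i) = ∑ i, M *ᵥ f i := by
  funext u
  simp only [mulVec, Finset.sum_apply]
  exact CS.dotProduct_sum' _ _

lemma CS.mulVec_formula {V : Type*} [Fintype V] [DecidableEq V] (M : Matrix V V ℝ)
    (hH : M.IsHermitian) (v : V → ℝ) :
    M *ᵥ v = ∑ i, (hH.eigenvalues i * hH.eigenvectorBasis.repr (WithLp.toLp 2 v) i) • ⇑(hH.eigenvectorBasis i) := by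
  have hv : (∑ i, hH.eigenvectorBasis.repr (WithLp.toLp 2 v) i • ⇑(hH.eigenvectorBasis i)) = v :=
    by simpa [WithLp.ofLp_sum] using congrArg WithLp.ofLp (hH.eigenvectorBasis.sum_repr (WithLp.toLp 2 v))
  conv_lhs => rw [← hv]
  rw [CS.mulVec_sum']
  refine Finset.sum_congr rfl fun i _ => ?_
  rw [mulVec_smul, hH.mulVec_eigenvectorBasis, smul_smul, mul_comm]

lemma CS.dot_basis {V : Type*} [Fintype V] [DecidableEq V] (M : Matrix V V ℝ)
    (hH : M.IsHermitian) (v : V → ℝ) (i : V) :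
    v ⬝ᵥ ⇑(hH.eigenvectorBasis i) = hH.eigenvectorBasis.repr (WithLp.toLp 2 v) i := by
  rw [dotProduct_comm, hH.eigenvectorBasis.repr_apply_apply, PiLp.inner_apply]
  simp [dotProduct, mul_comm]

lemma CS.quad_formula {V : Type*} [Fintype V] [DecidableEq V] (M : Matrix V V ℝ)
    (hH : M.IsHermitian) (v : V → ℝ) :
    v ⬝ᵥ M *ᵥ v = ∑ i, hH.eigenvalues i * (hH.eigenvectorBasis.repr (WithLp.toLp 2 v) i)^2 := by
  rw [CS.mulVec_formula M hH v, CS.dotProduct_sum']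
  refine Finset.sum_congr rfl fun i _ => ?_
  rw [dotProduct_smul, CS.dot_basis M hH v i, smul_eq_mul]; ring

end Aux

/-- Lemma (components, sign part): if `G` is connected, `M ∈ 𝓜(G)`,
`x ∈ ker M`, and the subgraph induced by `supp x` is disconnected, then every
connected component of `G[supp x]` lies entirely in `supp₊ x` or entirely in
`supp₋ x` (hence it is a connected component of `G[supp₊ x]` or of `G[supp₋ x]`). -/
theorem components_sign {V : Type*} [Fintype V] [DecidableEq V]
    (G : SimpleGraph V) (hG : G.Connected)
    (M : Matrix V V ℝ) (hM : InMG G M)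
    (x : V → ℝ) (hx : M.mulVec x = 0)
    (hdisc : ¬(G.induce {v | x v ≠ 0}).Connected) :
    ∀ C : (G.induce {v | x v ≠ 0}).ConnectedComponent,
      (∀ v ∈ C.supp, 0 < x v.val) ∨ (∀ v ∈ C.supp, x v.val < 0) := by
  classical
  obtain ⟨hSymm, hAdj, hNAdj, hHerm, hcard⟩ := hM
  set S : Set V := {v | x v ≠ 0} with hSdef
  intro C
  by_contra hcon
  push_neg at hcon
  obtain ⟨⟨a, haC, hxa'⟩, ⟨b, hbC, hxb'⟩⟩ := hcon
  have hxa : x a.val < 0 := lt_of_le_of_ne hxa' a.prop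
  have hxb : 0 < x b.val := lt_of_le_of_ne hxb' (Ne.symm b.prop)
  -- membership in the component C, as a predicate on V
  set inC : V → Prop := fun v => ∃ h : v ∈ S, (G.induce S).connectedComponentMk ⟨v, h⟩ = C
    with hinCdef
  have hinC_ne : ∀ v, inC v → x v ≠ 0 := fun v hv => hv.1
  have hMsymm : ∀ u v, M u v = M v u := fun u v => hSymm.apply v u
  have hMoffdiag : ∀ u v, u ≠ v → M u v ≤ 0 := by
    intro u v huv
    by_cases h : G.Adj u v
    · exact (hAdj u v h).le
    · exact (hNAdj u v huv h).le
  -- closure of C under adjacency within S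
  have hCC_adj : ∀ u v, inC u → v ∈ S → G.Adj u v → inC v := by
    rintro u v ⟨hu, huC⟩ hv hadj
    refine ⟨hv, ?_⟩
    rw [← huC]
    have hadj' : (SimpleGraph.induce S G).Adj ⟨u, hu⟩ ⟨v, hv⟩ := hadj
    exact (SimpleGraph.ConnectedComponent.connectedComponentMk_eq_of_adj hadj').symm
  have hzero : ∀ u v, inC u → ¬ inC v → v ∈ S → M u v = 0 ∧ M v u = 0 := by
    intro u v hu hv hvS
    have hne : u ≠ v := fun h => hv (h ▸ hu)
    have hnadj : ¬ G.Adj u v := fun h => hv (hCC_adj u v hu hvS h)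
    exact ⟨hNAdj u v hne hnadj, hNAdj v u hne.symm (fun h => hnadj h.symm)⟩
  -- the vectors
  set y : V → ℝ := fun v => if inC v then x v else 0 with hydef
  set z : V → ℝ := fun v => if inC v then 0 else x v with hzdef
  set w : V → ℝ := fun v => |y v| with hwdef
  set wt : V → ℝ := fun v => |z v| with hwtdef
  have hy_ne : ∀ v, y v ≠ 0 → inC v := by
    intro v hv; by_contra h; simp only [hydef, if_neg h] at hv; exact hv rfl
  have hz_ne : ∀ v, z v ≠ 0 → ¬ inC v ∧ v ∈ S := by
    intro v hv
    by_cases h : inC v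
    · simp only [hzdef, if_pos h] at hv; exact absurd rfl hv
    · refine ⟨h, ?_⟩; simp only [hzdef, if_neg h] at hv; exact hv
  have hyz : y + z = x := by
    funext v; by_cases h : inC v <;> simp [hydef, hzdef, h]
  -- mulVec facts
  have hMz_in : ∀ u, inC u → (M *ᵥ z) u = 0 := by
    intro u hu
    simp only [mulVec, dotProduct]
    refine Finset.sum_eq_zero fun v _ => ?_
    by_cases hv : z v = 0
    · rw [hv, mul_zero]
    · obtain ⟨h1, h2⟩ := hz_ne v hv
      rw [(hzero u v hu h1 h2).1, zero_mul]
  have hMy_out : ∀ u, u ∈ S → ¬ inC u → (M *ᵥ y) u = 0 := by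
    intro u huS hu
    simp only [mulVec, dotProduct]
    refine Finset.sum_eq_zero fun v _ => ?_
    by_cases hv : y v = 0
    · rw [hv, mul_zero]
    · rw [(hzero v u (hy_ne v hv) hu huS).2, zero_mul]
  have hMsum : ∀ u, (M *ᵥ y) u + (M *ᵥ z) u = 0 := by
    intro u
    have : M *ᵥ y + M *ᵥ z = 0 := by rw [← mulVec_add, hyz, hx]
    exact congrFun this u
  have hMy_S : ∀ u, u ∈ S → (M *ᵥ y) u = 0 := by
    intro u huS
    by_cases hu : inC u
    · have := hMsum u; rw [hMz_in u hu] at this; linarith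
    · exact hMy_out u huS hu
  have hMz_S : ∀ u, u ∈ S → (M *ᵥ z) u = 0 := by
    intro u huS
    have := hMsum u; rw [hMy_S u huS] at this; linarith
  -- quadratic form values
  have hyMy : y ⬝ᵥ (M *ᵥ y) = 0 := by
    simp only [dotProduct]
    refine Finset.sum_eq_zero fun u _ => ?_
    by_cases hu : y u = 0
    · rw [hu, zero_mul]
    · rw [hMy_S u (hinC_ne u (hy_ne u hu)), mul_zero]
  have hzMz : z ⬝ᵥ (M *ᵥ z) = 0 := by
    simp only [dotProduct]
    refine Finset.sum_eq_zero fun u _ => ?_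
    by_cases hu : z u = 0
    · rw [hu, zero_mul]
    · rw [hMz_S u (hz_ne u hu).2, mul_zero]
  have hwMwt : w ⬝ᵥ (M *ᵥ wt) = 0 := by
    simp only [dotProduct, mulVec]
    refine Finset.sum_eq_zero fun u _ => ?_
    by_cases hu : w u = 0
    · rw [hu, zero_mul]
    · have huC : inC u := by
        apply hy_ne; intro h; apply hu; rw [hwdef]; simp [h]
      have : (fun v => M u v * wt v) = fun _ => (0:ℝ) := by
        funext v
        by_cases hv : wt v = 0
        · rw [hv, mul_zero]
        · have hzv : z v ≠ 0 := by intro h; apply hv; rw [hwtdef]; simp [h]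
          obtain ⟨h1, h2⟩ := hz_ne v hzv
          rw [(hzero u v huC h1 h2).1, zero_mul]
      simp only [dotProduct, this]
      simp
  have hwtMw : wt ⬝ᵥ (M *ᵥ w) = 0 := by
    simp only [dotProduct, mulVec]
    refine Finset.sum_eq_zero fun u _ => ?_
    by_cases hu : wt u = 0
    · rw [hu, zero_mul]
    · have hzu : z u ≠ 0 := by intro h; apply hu; rw [hwtdef]; simp [h]
      obtain ⟨h1, h2⟩ := hz_ne u hzu
      have : (fun v => M u v * w v) = fun _ => (0:ℝ) := by
        funext v
        by_cases hv : w v = 0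
        · rw [hv, mul_zero]
        · have hyv : y v ≠ 0 := by intro h; apply hv; rw [hwdef]; simp [h]
          rw [(hzero v u (hy_ne v hyv) h1 h2).2, zero_mul]
      simp only [dotProduct, this]
      simp
  -- double-sum representation of the quadratic form
  have hquad : ∀ p : V → ℝ, p ⬝ᵥ (M *ᵥ p) = ∑ u, ∑ v, M u v * (p u * p v) := by
    intro p
    simp only [dotProduct, mulVec, Finset.mul_sum]
    exact Finset.sum_congr rfl fun u _ => Finset.sum_congr rfl fun v _ => by ring
  -- termwise comparison for absolute values
  have hterm : ∀ (p : V → ℝ) (u v : V), M u v * (|p u| * |p v|) ≤ M u v * (p u * p v) := by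
    intro p u v
    by_cases huv : u = v
    · subst huv; rw [abs_mul_abs_self]
    · have h1 : M u v ≤ 0 := hMoffdiag u v huv
      have h2 : p u * p v ≤ |p u| * |p v| := by
        rw [← abs_mul]; exact le_abs_self _
      nlinarith
  have hwtMwt : wt ⬝ᵥ (M *ᵥ wt) ≤ 0 := by
    rw [hquad]
    have : ∑ u, ∑ v, M u v * (wt u * wt v) ≤ ∑ u, ∑ v, M u v * (z u * z v) := by
      refine Finset.sum_le_sum fun u _ => Finset.sum_le_sum fun v _ => ?_
      simpa [hwtdef] using hterm z u v
    calc ∑ u, ∑ v, M u v * (wt u * wt v) ≤ ∑ u, ∑ v, M u v * (z u * z v) := this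
      _ = z ⬝ᵥ (M *ᵥ z) := (hquad z).symm
      _ = 0 := hzMz
  -- find an edge inside C with a sign change
  have hreach_ab : (G.induce S).Reachable a b := by
    rw [SimpleGraph.ConnectedComponent.mem_supp_iff] at haC hbC
    exact SimpleGraph.ConnectedComponent.exact (haC.trans hbC.symm)
  obtain ⟨p⟩ := hreach_ab
  obtain ⟨u₀, v₀, hadj₀, hu₀, hv₀, hreach₀⟩ :=
    CS.walk_boundary (fun (u : ↥S) => x u.val < 0) p hxa (by exact fun h => absurd hxb (asymm h))
  have hxv₀ : 0 < x v₀.val := lt_of_le_of_ne (not_lt.mp hv₀) (Ne.symm v₀.prop)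
  have hinCu₀ : inC u₀.val := by
    refine ⟨u₀.prop, ?_⟩
    rw [SimpleGraph.ConnectedComponent.mem_supp_iff] at haC
    rw [Subtype.coe_eta]
    rw [← haC]
    exact (SimpleGraph.ConnectedComponent.sound hreach₀).symm
  have hGadj₀ : G.Adj u₀.val v₀.val := hadj₀
  have hinCv₀ : inC v₀.val := hCC_adj u₀.val v₀.val hinCu₀ v₀.prop hGadj₀
  -- w ⬝ᵥ M w < 0
  have hwMw : w ⬝ᵥ (M *ᵥ w) < 0 := by
    rw [hquad]
    have hlt : ∑ u, ∑ v, M u v * (w u * w v) < ∑ u, ∑ v, M u v * (y u * y v) := by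
      refine Finset.sum_lt_sum (fun u _ => Finset.sum_le_sum fun v _ => by
        simpa [hwdef] using hterm y u v) ⟨u₀.val, Finset.mem_univ _, ?_⟩
      refine Finset.sum_lt_sum (fun v _ => by simpa [hwdef] using hterm y u₀.val v)
        ⟨v₀.val, Finset.mem_univ _, ?_⟩
      have hMneg : M u₀.val v₀.val < 0 := hAdj _ _ hGadj₀
      have hyu : y u₀.val = x u₀.val := by simp [hydef, hinCu₀]
      have hyv : y v₀.val = x v₀.val := by simp [hydef, hinCv₀]
      rw [hwdef]
      simp only [hyu, hyv]
      have h1 : |x u₀.val| = -x u₀.val := abs_of_neg hu₀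
      have h2 : |x v₀.val| = x v₀.val := abs_of_pos hxv₀
      rw [h1, h2]
      have hlhs : M u₀.val v₀.val * (-x u₀.val * x v₀.val) < 0 :=
        mul_neg_of_neg_of_pos hMneg (mul_pos (neg_pos.mpr hu₀) hxv₀)
      have hrhs : 0 < M u₀.val v₀.val * (x u₀.val * x v₀.val) :=
        mul_pos_of_neg_of_neg hMneg (mul_neg_of_neg_of_pos hu₀ hxv₀)
      linarith
    calc ∑ u, ∑ v, M u v * (w u * w v) < ∑ u, ∑ v, M u v * (y u * y v) := hlt
      _ = y ⬝ᵥ (M *ᵥ y) := (hquad y).symm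
      _ = 0 := hyMy
  -- existence of a vertex outside C with x ≠ 0
  obtain ⟨d, hd⟩ : ∃ d : ↥S, (G.induce S).connectedComponentMk d ≠ C := by
    by_contra h
    push_neg at h
    apply hdisc
    rw [SimpleGraph.connected_iff]
    exact ⟨fun p q => SimpleGraph.ConnectedComponent.exact ((h p).trans (h q).symm), ⟨a⟩⟩
  have hinCd : ¬ inC d.val := by
    rintro ⟨h1, h2⟩
    apply hd
    rwa [Subtype.coe_eta] at h2
  have hzd : z d.val ≠ 0 := by
    simp only [hzdef, if_neg hinCd]
    exact d.prop
  -- spectral setup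
  obtain ⟨i₀, hi₀⟩ := Finset.card_eq_one.mp hcard
  have hlneg : hHerm.eigenvalues i₀ < 0 := by
    have : i₀ ∈ Finset.univ.filter fun i => hHerm.eigenvalues i < 0 := by
      rw [hi₀]; exact Finset.mem_singleton_self i₀
    exact (Finset.mem_filter.mp this).2
  have hlnn : ∀ i, i ≠ i₀ → 0 ≤ hHerm.eigenvalues i := by
    intro i hi
    by_contra h
    push_neg at h
    have : i ∈ Finset.univ.filter fun j => hHerm.eigenvalues j < 0 :=
      Finset.mem_filter.mpr ⟨Finset.mem_univ _, h⟩
    rw [hi₀, Finset.mem_singleton] at this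
    exact hi this
  set ψ : V → ℝ := ⇑(hHerm.eigenvectorBasis i₀) with hψdef
  have hreprψ : ∀ p : V → ℝ, ψ ⬝ᵥ p = hHerm.eigenvectorBasis.repr (WithLp.toLp 2 p) i₀ := by
    intro p
    rw [dotProduct_comm]
    exact CS.dot_basis M hHerm p i₀
  have hPSD : ∀ p : V → ℝ, ψ ⬝ᵥ p = 0 → 0 ≤ p ⬝ᵥ (M *ᵥ p) := by
    intro p hp
    rw [hreprψ] at hp
    rw [CS.quad_formula M hHerm]
    refine Finset.sum_nonneg fun i _ => ?_
    by_cases hi : i = i₀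
    · subst hi; rw [hp]; simp
    · exact mul_nonneg (hlnn i hi) (sq_nonneg _)
  have hKer : ∀ p : V → ℝ, ψ ⬝ᵥ p = 0 → p ⬝ᵥ (M *ᵥ p) = 0 → M *ᵥ p = 0 := by
    intro p hp hq
    rw [hreprψ] at hp
    rw [CS.quad_formula M hHerm] at hq
    have hz' : ∀ i ∈ Finset.univ,
        hHerm.eigenvalues i * (hHerm.eigenvectorBasis.repr (WithLp.toLp 2 p) i)^2 = 0 := by
      rw [← Finset.sum_eq_zero_iff_of_nonneg]
      · exact hq
      · intro i _
        by_cases hi : i = i₀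
        · subst hi; rw [hp]; simp
        · exact mul_nonneg (hlnn i hi) (sq_nonneg _)
    rw [CS.mulVec_formula M hHerm p]
    refine Finset.sum_eq_zero fun i _ => ?_
    suffices h : hHerm.eigenvalues i * hHerm.eigenvectorBasis.repr (WithLp.toLp 2 p) i = 0 by
      rw [h, zero_smul]
    by_cases hi : i = i₀
    · subst hi; rw [hp, mul_zero]
    · have := hz' i (Finset.mem_univ i)
      rcases mul_eq_zero.mp this with h | h
      · rw [h, zero_mul]
      · rw [pow_eq_zero_iff (by norm_num) |>.mp h, mul_zero]
  -- case split on ψ ⬝ᵥ wt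
  by_cases hψwt : ψ ⬝ᵥ wt = 0
  · -- then wt is a nonzero nonnegative kernel vector vanishing on C : contradiction
    have hwtq : wt ⬝ᵥ (M *ᵥ wt) = 0 := le_antisymm hwtMwt (hPSD wt hψwt)
    have hMwt : M *ᵥ wt = 0 := hKer wt hψwt hwtq
    -- boundary argument along a walk from d to u₀
    have hreach : G.Reachable d.val u₀.val := hG.preconnected d.val u₀.val
    obtain ⟨pw⟩ := hreach
    have hwtu₀ : ¬ wt u₀.val ≠ 0 := by
      simp only [hwtdef, hzdef, if_pos hinCu₀, not_not, abs_zero]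
    obtain ⟨p', q', hadj', hp', hq', _⟩ :=
      CS.walk_boundary (fun v => wt v ≠ 0) pw (by simpa [hwtdef] using hzd) hwtu₀
    rw [not_not] at hq'
    have hsum : (M *ᵥ wt) q' = 0 := congrFun hMwt q'
    have hneg : (M *ᵥ wt) q' < 0 := by
      simp only [mulVec, dotProduct]
      have hle : ∀ v ∈ Finset.univ, M q' v * wt v ≤ 0 := by
        intro v _
        by_cases hv : v = q'
        · subst hv; rw [hq', mul_zero]
        · exact mul_nonpos_iff.mpr (Or.inr ⟨hMoffdiag q' v (Ne.symm hv), abs_nonneg _⟩)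
      have hstrict : M q' p' * wt p' < 0 := by
        have h1 : M q' p' < 0 := hAdj _ _ hadj'.symm
        have h2 : 0 < wt p' := lt_of_le_of_ne (abs_nonneg _) (Ne.symm hp')
        exact mul_neg_of_neg_of_pos h1 h2
      calc ∑ v, M q' v * wt v
          < ∑ (v : V), (0:ℝ) := by
            refine Finset.sum_lt_sum hle ⟨p', Finset.mem_univ _, ?_⟩
            simpa using hstrict
        _ = 0 := by simp
    rw [hsum] at hneg
    exact absurd hneg (lt_irrefl 0)
  · -- combine w and wt into a vector orthogonal to ψ with negative quadratic form
    set α : ℝ := ψ ⬝ᵥ wt with hαdef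
    set β : ℝ := ψ ⬝ᵥ w with hβdef
    set q : V → ℝ := α • w - β • wt with hqdef
    have hψq : ψ ⬝ᵥ q = 0 := by
      rw [hqdef, dotProduct_sub, dotProduct_smul, dotProduct_smul, ← hαdef, ← hβdef]
      simp [smul_eq_mul]; ring
    have hQq : q ⬝ᵥ (M *ᵥ q) = α^2 * (w ⬝ᵥ (M *ᵥ w)) + β^2 * (wt ⬝ᵥ (M *ᵥ wt)) := by
      rw [hqdef]
      rw [mulVec_sub, mulVec_smul, mulVec_smul]
      rw [sub_dotProduct, smul_dotProduct, smul_dotProduct,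
        dotProduct_sub, dotProduct_sub, dotProduct_smul, dotProduct_smul,
        dotProduct_smul, dotProduct_smul]
      rw [hwMwt, hwtMw]
      simp only [smul_eq_mul]
      ring
    have hα2 : 0 < α^2 := by positivity
    have hQqneg : q ⬝ᵥ (M *ᵥ q) < 0 := by
      rw [hQq]
      have h1 : α^2 * (w ⬝ᵥ (M *ᵥ w)) < 0 := mul_neg_of_pos_of_neg hα2 hwMw
      have h2 : β^2 * (wt ⬝ᵥ (M *ᵥ wt)) ≤ 0 := mul_nonpos_iff.mpr (Or.inl ⟨sq_nonneg _, hwtMwt⟩)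
      linarith
    exact absurd (hPSD q hψq) (not_le.mpr hQqneg)
end

section
/- Let G = (V,E) be a simple graph, M ∈ 𝓜(G), and let X ∈ ℝ^{V×V} be a symmetric matrix with X_{uv} = 0 whenever uv ∈ E, with zero diagonal, and with MX = 0. Then, with k := dim ker(M), there exist vectors x₁, …, x_k ∈ ker(M) and signs σ₁, …, σ_k ∈ {−1, 1} such that X = Σ_{i=1}^{k} σ_i · x_i x_iᵀ. Moreover, if X ≠ 0, then not all of the σ_i have the same sign. -/
open Matrix

/-- Spectral decomposition as a sum of rank-one matrices. -/
lemma herm_sum_rank_one {V : Type*} [Fintype V] [DecidableEq V]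
    (X : Matrix V V ℝ) (hX : X.IsHermitian) :
    X = ∑ i, hX.eigenvalues i • vecMulVec (⇑(hX.eigenvectorBasis i)) (⇑(hX.eigenvectorBasis i)) := by
  conv_lhs => rw [hX.spectral_theorem, Unitary.conjStarAlgAut_apply]
  ext a b
  simp only [Matrix.mul_apply, Matrix.diagonal_apply, Matrix.sum_apply, vecMulVec_apply,
    hX.eigenvectorUnitary_apply, Matrix.smul_apply, Function.comp, star_apply,
    Matrix.star_apply, RCLike.star_def, Finset.sum_ite_eq, Finset.mem_univ, if_true,
    smul_eq_mul, mul_ite, mul_zero, Finset.sum_ite_eq', starRingEnd_apply, star_trivial,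
    RCLike.ofReal_real_eq_id, id_eq]
  exact Finset.sum_congr rfl fun x _ => by ring

/-- Trace equals the sum of the eigenvalues (real case). -/
lemma herm_trace_eq_sum {V : Type*} [Fintype V] [DecidableEq V]
    (X : Matrix V V ℝ) (hX : X.IsHermitian) :
    X.trace = ∑ i, hX.eigenvalues i := by
  conv_lhs => rw [hX.spectral_theorem, Unitary.conjStarAlgAut_apply]
  rw [Matrix.trace_mul_comm, ← Matrix.mul_assoc,
    (Matrix.mem_unitaryGroup_iff').mp (hX.eigenvectorUnitary).2, Matrix.one_mul]
  simp [Matrix.trace, Matrix.diag, Function.comp]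

lemma real_sign_mul_abs (r : ℝ) : r.sign * |r| = r := by
  rcases lt_trichotomy r 0 with h | h | h
  · rw [Real.sign_of_neg h, abs_of_neg h]; ring
  · simp [h]
  · rw [Real.sign_of_pos h, abs_of_pos h]; ring

lemma vecMulVec_zero_zero {V W : Type*} : vecMulVec (0 : V → ℝ) (0 : W → ℝ) = (0 : Matrix V W ℝ) := by
  ext u w; simp [vecMulVec_apply]

lemma vecMulVec_smul_smul {V : Type*} [Fintype V] (c : ℝ) (a : V → ℝ) :
    vecMulVec (c • a) (c • a) = (c * c) • vecMulVec a a := by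
  ext u w
  simp [vecMulVec_apply]
  ring

/-- The eigenvector family, as plain functions, is linearly independent. -/
lemma eigvec_li {V : Type*} [Fintype V] [DecidableEq V]
    (X : Matrix V V ℝ) (hX : X.IsHermitian) :
    LinearIndependent ℝ (fun i => (⇑(hX.eigenvectorBasis i) : V → ℝ)) := by
  have h1 : LinearIndependent ℝ (fun i => (hX.eigenvectorBasis i : EuclideanSpace ℝ V)) :=
    hX.eigenvectorBasis.orthonormal.linearIndependent
  exact h1.map' (WithLp.linearEquiv 2 ℝ (V → ℝ)).toLinearMap
    (LinearMap.ker_eq_bot.2 (WithLp.linearEquiv 2 ℝ (V → ℝ)).injective)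


/-- Lemma: if `M ∈ 𝓜(G)` and `X` is a symmetric `Ḡ`-matrix with zero diagonal
satisfying `MX = 0`, then `X = ∑ σᵢ xᵢ xᵢᵀ` for some `x₁, …, x_k ∈ ker M` and signs
`σᵢ ∈ {−1, 1}`, where `k = corank M`; moreover if `X ≠ 0` then not all the
signs agree. -/
theorem SAP_sum_rank_one {V : Type*} [Fintype V] [DecidableEq V]
    (G : SimpleGraph V) (M : Matrix V V ℝ) (hM : InMG G M)
    (X : Matrix V V ℝ) (hXsymm : X.IsSymm)
    (hXedge : ∀ u v, G.Adj u v → X u v = 0)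
    (hXdiag : ∀ u, X u u = 0)
    (hMX : M * X = 0) :
    ∃ (x : Fin (Module.finrank ℝ (LinearMap.ker M.mulVecLin)) → (V → ℝ))
      (σ : Fin (Module.finrank ℝ (LinearMap.ker M.mulVecLin)) → ℝ),
      (∀ i, σ i = 1 ∨ σ i = -1) ∧
      (∀ i, M.mulVec (x i) = 0) ∧
      X = ∑ i, σ i • vecMulVec (x i) (x i) ∧
      (X ≠ 0 → ∃ i j, σ i ≠ σ j) := by
  classical
  have hX' : X.IsHermitian := hXsymm
  set ev : V → ℝ := hX'.eigenvalues with hev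
  set v : V → (V → ℝ) := fun i => ⇑(hX'.eigenvectorBasis i) with hv
  set K := LinearMap.ker M.mulVecLin with hK
  set k := Module.finrank ℝ K with hk
  have key : X = ∑ i, ev i • vecMulVec (v i) (v i) := herm_sum_rank_one X hX'
  have htr : ∑ i, ev i = 0 := by
    rw [← herm_trace_eq_sum X hX']
    simp [Matrix.trace, Matrix.diag, hXdiag]
  have hker : ∀ i, ev i ≠ 0 → M *ᵥ v i = 0 := by
    intro i hi
    have h1 : X *ᵥ v i = ev i • v i := hX'.mulVec_eigenvectorBasis i
    have h2 : M *ᵥ (X *ᵥ v i) = 0 := by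
      rw [Matrix.mulVec_mulVec, hMX, Matrix.zero_mulVec]
    rw [h1, Matrix.mulVec_smul] at h2
    rcases smul_eq_zero.mp h2 with h | h
    · exact absurd h hi
    · exact h
  -- the support of the eigenvalues
  set S : Finset V := Finset.univ.filter fun i => ev i ≠ 0 with hS
  have hmemS : ∀ i : V, i ∈ S → ev i ≠ 0 := fun i hi => (Finset.mem_filter.mp hi).2
  have hmemK : ∀ i : S, v i ∈ K := by
    intro i
    simp only [hK, LinearMap.mem_ker, Matrix.mulVecLin_apply]
    exact hker i (hmemS i i.2)
  -- linear independence and cardinality bound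
  have hv_li : LinearIndependent ℝ v := eigvec_li X hX'
  set w : S → K := fun i => ⟨v i, hmemK i⟩ with hw
  have hw_li : LinearIndependent ℝ w := by
    apply LinearIndependent.of_comp K.subtype
    exact hv_li.comp Subtype.val Subtype.val_injective
  have hcard : Fintype.card S ≤ k := hw_li.fintype_card_le_finrank
  obtain ⟨e⟩ : Nonempty (S ↪ Fin k) :=
    Function.Embedding.nonempty_of_card_le (by simpa using hcard)
  -- construct the vectors and signs
  set x : Fin k → (V → ℝ) :=
    Function.extend e (fun i : S => Real.sqrt |ev i| • v i) 0 with hx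
  set σ : Fin k → ℝ := Function.extend e (fun i : S => Real.sign (ev i)) 1 with hσ
  have hxe : ∀ i : S, x (e i) = Real.sqrt |ev i| • v i := fun i =>
    e.injective.extend_apply _ _ i
  have hσe : ∀ i : S, σ (e i) = Real.sign (ev i) := fun i =>
    e.injective.extend_apply _ _ i
  have hxout : ∀ j : Fin k, (¬∃ i : S, e i = j) → x j = 0 := fun j hj =>
    Function.extend_apply' _ _ _ hj
  have hσout : ∀ j : Fin k, (¬∃ i : S, e i = j) → σ j = 1 := fun j hj =>
    Function.extend_apply' _ _ _ hj
  refine ⟨x, σ, ?_, ?_, ?_, ?_⟩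
  · -- signs are ±1
    intro j
    by_cases hj : ∃ i : S, e i = j
    · obtain ⟨i, rfl⟩ := hj
      rw [hσe i]
      rcases lt_or_gt_of_ne (hmemS i i.2) with h | h
      · exact Or.inr (Real.sign_of_neg h)
      · exact Or.inl (Real.sign_of_pos h)
    · exact Or.inl (hσout j hj)
  · -- kernel membership
    intro j
    by_cases hj : ∃ i : S, e i = j
    · obtain ⟨i, rfl⟩ := hj
      rw [hxe i, Matrix.mulVec_smul, hker i (hmemS i i.2), smul_zero]
    · rw [hxout j hj, Matrix.mulVec_zero]
  · -- the decomposition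
    rw [key]
    have h1 : ∑ j : Fin k, σ j • vecMulVec (x j) (x j)
        = ∑ j ∈ Finset.univ.image e, σ j • vecMulVec (x j) (x j) := by
      refine (Finset.sum_subset (Finset.subset_univ _) ?_).symm
      intro j _ hj
      have : ¬∃ i : S, e i = j := by
        simpa [Finset.mem_image] using hj
      rw [hxout j this, vecMulVec_zero_zero, smul_zero]
    rw [h1, Finset.sum_image (fun i _ j _ h => e.injective h)]
    have h2 : ∀ i : S, σ (e i) • vecMulVec (x (e i)) (x (e i))
        = ev i • vecMulVec (v i) (v i) := by
      intro i
      rw [hxe i, hσe i, vecMulVec_smul_smul, smul_smul,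
        Real.mul_self_sqrt (abs_nonneg _), real_sign_mul_abs]
    rw [Finset.sum_congr rfl fun i _ => h2 i]
    rw [Finset.sum_coe_sort S (fun i => ev i • vecMulVec (v i) (v i))]
    refine (Finset.sum_subset (Finset.filter_subset _ _) ?_).symm
    intro i _ hi
    have : ev i = 0 := by
      by_contra h
      exact hi (Finset.mem_filter.mpr ⟨Finset.mem_univ i, h⟩)
    rw [this, zero_smul]
  · -- if X ≠ 0, the signs are not all equal
    intro hX0
    have hex : ∃ i, ev i ≠ 0 := by
      by_contra h
      push_neg at h
      apply hX0
      rw [key]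
      exact Finset.sum_eq_zero fun i _ => by rw [h i, zero_smul]
    obtain ⟨i0, hi0⟩ := hex
    have hpos : ∃ p, 0 < ev p := by
      by_contra h
      push_neg at h
      have := (Finset.sum_eq_zero_iff_of_nonpos (fun i _ => h i)).mp htr i0 (Finset.mem_univ i0)
      exact hi0 this
    have hneg : ∃ q, ev q < 0 := by
      by_contra h
      push_neg at h
      have := (Finset.sum_eq_zero_iff_of_nonneg (fun i _ => h i)).mp htr i0 (Finset.mem_univ i0)
      exact hi0 this
    obtain ⟨p, hp⟩ := hpos
    obtain ⟨q, hq⟩ := hneg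
    have hpS : p ∈ S := Finset.mem_filter.mpr ⟨Finset.mem_univ p, ne_of_gt hp⟩
    have hqS : q ∈ S := Finset.mem_filter.mpr ⟨Finset.mem_univ q, ne_of_lt hq⟩
    refine ⟨e ⟨p, hpS⟩, e ⟨q, hqS⟩, ?_⟩
    rw [hσe ⟨p, hpS⟩, hσe ⟨q, hqS⟩, Real.sign_of_pos hp, Real.sign_of_neg hq]
    norm_num
end

section
/- Let G be the complete bipartite graph with parts A and B of sizes a ≥ 1 and b ≥ 1, and let S ⊆ A ∪ B be a set of vertices such that A ⊄ S and B ⊄ S. Then there exists ε₀ > 0 such that for every ε with 0 < ε < ε₀, the matrix M := ε·I_S − A_G belongs to 𝓜(G); that is, M is symmetric, M_{uv} < 0 for every edge uv, M_{uv} = 0 for every non-adjacent pair u ≠ v, and M has exactly one negative eigenvalue. -/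
open Matrix

open scoped Classical in
/-- If the quadratic form of a real symmetric matrix `M` is nonnegative on the kernel of a
linear functional, and negative somewhere, then `M` has exactly one negative eigenvalue. -/
lemma one_neg_eigenvalue {V : Type*} [Fintype V] [DecidableEq V]
    {M : Matrix V V ℝ} (hM : M.IsHermitian) (f : V → ℝ)
    (hpos : ∀ x : V → ℝ, f ⬝ᵥ x = 0 → 0 ≤ x ⬝ᵥ (M *ᵥ x))
    (hneg : ∃ y : V → ℝ, y ⬝ᵥ (M *ᵥ y) < 0) :
    (Finset.univ.filter fun i => hM.eigenvalues i < 0).card = 1 := by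
  set v : V → (V → ℝ) := fun i => ⇑(hM.eigenvectorBasis i) with hv
  have orth : ∀ i j : V, v i ⬝ᵥ v j = if i = j then 1 else 0 := by
    intro i j
    have := orthonormal_iff_ite.mp hM.eigenvectorBasis.orthonormal i j
    rw [EuclideanSpace.inner_eq_star_dotProduct] at this
    simpa [dotProduct, mul_comm] using this
  have hmv : ∀ i : V, M *ᵥ v i = hM.eigenvalues i • v i := fun i =>
    hM.mulVec_eigenvectorBasis i
  have quad : ∀ (p q : ℝ) (i j : V), i ≠ j →
      (p • v i + q • v j) ⬝ᵥ (M *ᵥ (p • v i + q • v j)) =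
        p ^ 2 * hM.eigenvalues i + q ^ 2 * hM.eigenvalues j := by
    intro p q i j hij
    simp only [mulVec_add, mulVec_smul, hmv, dotProduct_add, add_dotProduct,
      dotProduct_smul, smul_dotProduct, smul_eq_mul, orth, if_pos rfl,
      if_neg hij, if_neg (Ne.symm hij), if_pos trivial]
    ring
  rw [Finset.card_eq_one]
  have hne : (Finset.univ.filter fun i => hM.eigenvalues i < 0).Nonempty := by
    by_contra h
    rw [Finset.not_nonempty_iff_eq_empty, Finset.filter_eq_empty_iff] at h
    have hPSD : M.PosSemidef := (hM.posSemidef_iff_eigenvalues_nonneg).mpr fun i => by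
      have := h (Finset.mem_univ i); rw [Pi.zero_apply]; linarith
    obtain ⟨y, hy⟩ := hneg
    have := hPSD.dotProduct_mulVec_nonneg y
    simp only [RCLike.re_to_real, star_trivial] at this
    linarith
  obtain ⟨i, hi⟩ := hne
  refine ⟨i, Finset.eq_singleton_iff_unique_mem.mpr ⟨hi, fun j hj => ?_⟩⟩
  by_contra hij
  simp only [Finset.mem_filter] at hi hj
  have hfi : f ⬝ᵥ v i ≠ 0 := by
    intro h0
    have hp := hpos (v i) (by simpa using h0)
    have h1 : v i = (1:ℝ) • v i + (0:ℝ) • v j := by simp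
    rw [h1, quad 1 0 i j (Ne.symm hij)] at hp
    norm_num at hp
    linarith [hi.2]
  have hfj : f ⬝ᵥ v j ≠ 0 := by
    intro h0
    have hp := hpos (v j) (by simpa using h0)
    have h1 : v j = (0:ℝ) • v i + (1:ℝ) • v j := by simp
    rw [h1, quad 0 1 i j (Ne.symm hij)] at hp
    norm_num at hp
    linarith [hj.2]
  set c : ℝ := f ⬝ᵥ v j with hc
  set d : ℝ := f ⬝ᵥ v i with hd
  set x : V → ℝ := c • v i + (-d) • v j with hx
  have hfx : f ⬝ᵥ x = 0 := by
    simp [hx, dotProduct_add, dotProduct_smul, ← hc, ← hd]; ring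
  have hqx := quad c (-d) i j (Ne.symm hij)
  have := hpos x hfx
  rw [hqx] at this
  nlinarith [sq_nonneg c, sq_nonneg d, hi.2, hj.2, pow_pos (abs_pos.mpr hfi) 2,
    sq_abs c, sq_abs d, pow_pos (abs_pos.mpr hfj) 2, sq_abs (f ⬝ᵥ v j), sq_abs (f ⬝ᵥ v i)]

open scoped Classical in
/-- Observation (first part): for the complete bipartite graph `K_{a,b}` with parts
`A = Fin a`, `B = Fin b` (`a, b ≥ 1`) and a vertex set `S` containing neither `A`
nor `B` entirely, for all sufficiently small `ε > 0` the matrix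
`M = ε I_S − A_G` belongs to `𝓜(K_{a,b})`. -/
theorem perturbed_bipartite_in_MG (a b : ℕ) (ha : 1 ≤ a) (hb : 1 ≤ b)
    (S : Finset (Fin a ⊕ Fin b))
    (hA : ∃ u : Fin a, Sum.inl u ∉ S) (hB : ∃ w : Fin b, Sum.inr w ∉ S) :
    ∃ ε₀ > 0, ∀ ε : ℝ, 0 < ε → ε < ε₀ →
      InMG (completeBipartiteGraph (Fin a) (Fin b))
        (ε • Matrix.diagonal (fun v => if v ∈ S then (1 : ℝ) else 0) -
          (completeBipartiteGraph (Fin a) (Fin b)).adjMatrix ℝ) := by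
  have ha' : (0:ℝ) < a := by exact_mod_cast ha
  have hb' : (0:ℝ) < b := by exact_mod_cast hb
  refine ⟨2 * a * b / (a + b), by positivity, fun ε hε hε₀ => ?_⟩
  set G := completeBipartiteGraph (Fin a) (Fin b) with hG
  set M : Matrix (Fin a ⊕ Fin b) (Fin a ⊕ Fin b) ℝ :=
    ε • Matrix.diagonal (fun v => if v ∈ S then (1 : ℝ) else 0) - G.adjMatrix ℝ with hM
  have hentry : ∀ u v, u ≠ v → M u v = -(if G.Adj u v then 1 else 0) := by
    intro u v huv
    simp [hM, Matrix.sub_apply, Matrix.smul_apply, Matrix.diagonal_apply_ne _ huv,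
      SimpleGraph.adjMatrix_apply]
  have quadform : ∀ x : (Fin a ⊕ Fin b) → ℝ,
      x ⬝ᵥ (M *ᵥ x) = ε * ∑ v ∈ S, (x v)^2 -
        2 * (∑ u, x (Sum.inl u)) * (∑ w, x (Sum.inr w)) := by
    intro x
    have hdiag : x ⬝ᵥ ((Matrix.diagonal (fun v => if v ∈ S then (1:ℝ) else 0)) *ᵥ x)
        = ∑ v ∈ S, (x v)^2 := by
      simp only [dotProduct, mulVec_diagonal]
      rw [Finset.sum_congr rfl (fun v _ => show x v * ((if v ∈ S then (1:ℝ) else 0) * x v)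
        = if v ∈ S then (x v)^2 else 0 by split_ifs <;> ring)]
      rw [Finset.sum_ite_mem, Finset.univ_inter]
    have hadj : x ⬝ᵥ ((G.adjMatrix ℝ) *ᵥ x)
        = 2 * (∑ u, x (Sum.inl u)) * (∑ w, x (Sum.inr w)) := by
      simp only [dotProduct, mulVec, SimpleGraph.adjMatrix_apply, hG,
        completeBipartiteGraph_adj, Fintype.sum_sum_type, Sum.isLeft_inl, Sum.isRight_inl,
        Sum.isLeft_inr, Sum.isRight_inr]
      norm_num
      simp only [Finset.mul_sum, Finset.sum_mul]
      rw [Finset.sum_comm, ← Finset.sum_add_distrib]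
      refine Finset.sum_congr rfl fun w _ => ?_
      rw [← Finset.sum_add_distrib]
      exact Finset.sum_congr rfl fun u _ => by ring
    rw [hM, sub_mulVec, dotProduct_sub, smul_mulVec, dotProduct_smul,
      smul_eq_mul, hdiag, hadj]
  have hsymm : M.IsSymm := by
    rw [hM]
    exact ((Matrix.isSymm_diagonal _).smul ε).sub (SimpleGraph.isSymm_adjMatrix G)
  have hherm : M.IsHermitian := by
    show Mᴴ = M
    rw [conjTranspose_eq_transpose_of_trivial]
    exact hsymm
  refine ⟨hsymm, ?_, ?_, hherm, ?_⟩
  · intro u v huv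
    rw [hentry u v huv.ne, if_pos huv]
    norm_num
  · intro u v huv hadj
    rw [hentry u v huv, if_neg hadj, neg_zero]
  · apply one_neg_eigenvalue hherm (Sum.elim (fun _ => (1:ℝ)) (fun _ => 0))
    · intro x hx
      have hsA : (∑ u, x (Sum.inl u)) = 0 := by
        rw [← hx]
        simp [dotProduct, Fintype.sum_sum_type]
      rw [quadform x, hsA]
      have : (0:ℝ) ≤ ∑ v ∈ S, (x v)^2 := Finset.sum_nonneg fun v _ => sq_nonneg _
      nlinarith
    · refine ⟨fun _ => 1, ?_⟩
      rw [quadform]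
      simp only [one_pow, Finset.sum_const, nsmul_eq_mul, mul_one, Finset.sum_const,
        Finset.card_univ, Fintype.card_fin]
      have hcard : (S.card : ℝ) ≤ (a : ℝ) + b := by
        have h0 : S.card ≤ a + b := by
          simpa [Fintype.card_sum] using Finset.card_le_univ S
        exact_mod_cast h0
      have h1 : ε * S.card ≤ ε * ((a:ℝ) + b) := by
        apply mul_le_mul_of_nonneg_left hcard hε.le
      have h2 : ε * ((a:ℝ) + b) < 2 * a * b :=
        (lt_div_iff₀ (by positivity)).mp hε₀
      nlinarith
end

section
/- Let G be the complete bipartite graph with parts A and B of sizes a ≥ 1 and b ≥ 1, and let S ⊆ A ∪ B satisfy A ⊄ S and B ⊄ S. Then there exists ε₀ > 0 such that for every ε with 0 < ε < ε₀, the matrix M := ε·I_S − A_G satisfies dim ker(M) = a + b − 2 − |S|, and moreover ker(M) = { x ∈ ℝ^{A∪B} : xᵀ𝟙_{A∖S} = 0, xᵀ𝟙_{B∖S} = 0, and supp(x) ∩ S = ∅ }. -/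
open Matrix

open scoped Classical in
/-- Observation (second part): for `K_{a,b}` (`a, b ≥ 1`) and `S` containing
neither part entirely, for all sufficiently small `ε > 0` the matrix
`M = ε I_S − A_G` has `dim ker M = a + b − 2 − |S|`, and its kernel consists
exactly of the vectors `x` with `xᵀ𝟙_{A∖S} = 0 = xᵀ𝟙_{B∖S}` and
`supp(x) ∩ S = ∅`. -/
theorem perturbed_bipartite_kernel (a b : ℕ) (ha : 1 ≤ a) (hb : 1 ≤ b)
    (S : Finset (Fin a ⊕ Fin b))
    (hA : ∃ u : Fin a, Sum.inl u ∉ S) (hB : ∃ w : Fin b, Sum.inr w ∉ S) :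
    ∃ ε₀ > 0, ∀ ε : ℝ, 0 < ε → ε < ε₀ →
      Module.finrank ℝ
          (LinearMap.ker
            (ε • Matrix.diagonal (fun v => if v ∈ S then (1 : ℝ) else 0) -
              (completeBipartiteGraph (Fin a) (Fin b)).adjMatrix ℝ).mulVecLin) =
        a + b - 2 - S.card ∧
      (LinearMap.ker
          (ε • Matrix.diagonal (fun v => if v ∈ S then (1 : ℝ) else 0) -
            (completeBipartiteGraph (Fin a) (Fin b)).adjMatrix ℝ).mulVecLin :
          Set ((Fin a ⊕ Fin b) → ℝ)) =
        {x | (∑ u ∈ Finset.univ.filter (fun u : Fin a => Sum.inl u ∉ S),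
                x (Sum.inl u)) = 0 ∧
             (∑ w ∈ Finset.univ.filter (fun w : Fin b => Sum.inr w ∉ S),
                x (Sum.inr w)) = 0 ∧
             ∀ v ∈ S, x v = 0} := by
  classical
  obtain ⟨u0, hu0⟩ := hA
  obtain ⟨w0, hw0⟩ := hB
  refine ⟨1, one_pos, fun ε hε _ => ?_⟩
  set M : Matrix (Fin a ⊕ Fin b) (Fin a ⊕ Fin b) ℝ :=
    ε • Matrix.diagonal (fun v => if v ∈ S then (1 : ℝ) else 0) -
      (completeBipartiteGraph (Fin a) (Fin b)).adjMatrix ℝ with hM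
  -- adjacency mulVec computations
  have hadjL : ∀ (x : (Fin a ⊕ Fin b) → ℝ) (u : Fin a),
      ((completeBipartiteGraph (Fin a) (Fin b)).adjMatrix ℝ).mulVec x (Sum.inl u)
        = ∑ w : Fin b, x (Sum.inr w) := by
    intro x u
    rw [SimpleGraph.adjMatrix_mulVec_apply]
    rw [show (completeBipartiteGraph (Fin a) (Fin b)).neighborFinset (Sum.inl u)
        = Finset.univ.map ⟨Sum.inr, Sum.inr_injective⟩ from ?_]
    · rw [Finset.sum_map]; rfl
    · ext v; cases v <;> simp [SimpleGraph.mem_neighborFinset]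
  have hadjR : ∀ (x : (Fin a ⊕ Fin b) → ℝ) (w : Fin b),
      ((completeBipartiteGraph (Fin a) (Fin b)).adjMatrix ℝ).mulVec x (Sum.inr w)
        = ∑ u : Fin a, x (Sum.inl u) := by
    intro x w
    rw [SimpleGraph.adjMatrix_mulVec_apply]
    rw [show (completeBipartiteGraph (Fin a) (Fin b)).neighborFinset (Sum.inr w)
        = Finset.univ.map ⟨Sum.inl, Sum.inl_injective⟩ from ?_]
    · rw [Finset.sum_map]; rfl
    · ext v; cases v <;> simp [SimpleGraph.mem_neighborFinset]
  have hMapp : ∀ (x : (Fin a ⊕ Fin b) → ℝ) (v : Fin a ⊕ Fin b),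
      M.mulVec x v = ε * (if v ∈ S then x v else 0) -
        (Sum.elim (fun _ : Fin a => ∑ w : Fin b, x (Sum.inr w))
          (fun _ : Fin b => ∑ u : Fin a, x (Sum.inl u)) v) := by
    intro x v
    rw [hM, Matrix.sub_mulVec, Matrix.smul_mulVec]
    cases v with
    | inl u =>
        simp [Matrix.mulVec_diagonal, hadjL x u]

    | inr w =>
        simp [Matrix.mulVec_diagonal, hadjR x w]

  -- kernel characterization
  have hker : ∀ x : (Fin a ⊕ Fin b) → ℝ, M.mulVec x = 0 ↔
      ((∑ u ∈ Finset.univ.filter (fun u : Fin a => Sum.inl u ∉ S), x (Sum.inl u)) = 0 ∧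
       (∑ w ∈ Finset.univ.filter (fun w : Fin b => Sum.inr w ∉ S), x (Sum.inr w)) = 0 ∧
       ∀ v ∈ S, x v = 0) := by
    intro x
    constructor
    · intro h
      have hB0 : (∑ w : Fin b, x (Sum.inr w)) = 0 := by
        have := congrFun h (Sum.inl u0)
        rw [hMapp] at this
        simpa [hu0] using this
      have hA0 : (∑ u : Fin a, x (Sum.inl u)) = 0 := by
        have := congrFun h (Sum.inr w0)
        rw [hMapp] at this
        simpa [hw0] using this
      have hSz : ∀ v ∈ S, x v = 0 := by
        intro v hv
        have := congrFun h v
        rw [hMapp] at this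
        cases v with
        | inl u =>
            simp [hv, hB0] at this
            rcases this with h' | h'
            · exact absurd h' (ne_of_gt hε)
            · exact h'
        | inr w =>
            simp [hv, hA0] at this
            rcases this with h' | h'
            · exact absurd h' (ne_of_gt hε)
            · exact h'
      refine ⟨?_, ?_, hSz⟩
      · rw [Finset.sum_filter_of_ne]
        · exact hA0
        · intro u _ hne
          by_contra hc
          exact hne (hSz _ hc)
      · rw [Finset.sum_filter_of_ne]
        · exact hB0
        · intro w _ hne
          by_contra hc
          exact hne (hSz _ hc)
    · rintro ⟨h1, h2, h3⟩
      have hA0 : (∑ u : Fin a, x (Sum.inl u)) = 0 := by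
        rw [← Finset.sum_filter_of_ne (p := fun u : Fin a => Sum.inl u ∉ S)]
        · exact h1
        · intro u _ hne
          by_contra hc
          exact hne (h3 _ hc)
      have hB0 : (∑ w : Fin b, x (Sum.inr w)) = 0 := by
        rw [← Finset.sum_filter_of_ne (p := fun w : Fin b => Sum.inr w ∉ S)]
        · exact h2
        · intro w _ hne
          by_contra hc
          exact hne (h3 _ hc)
      funext v
      rw [hMapp]
      by_cases hv : v ∈ S
      · cases v <;> simp [hv, h3 _ hv, hA0, hB0]
      · cases v <;> simp [hv, hA0, hB0]
  -- the comparison linear map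
  let L : ((Fin a ⊕ Fin b) → ℝ) →ₗ[ℝ] (ℝ × ℝ × (S → ℝ)) :=
    { toFun := fun x =>
        (∑ u ∈ Finset.univ.filter (fun u : Fin a => Sum.inl u ∉ S), x (Sum.inl u),
         ∑ w ∈ Finset.univ.filter (fun w : Fin b => Sum.inr w ∉ S), x (Sum.inr w),
         fun v => x v)
      map_add' := by intro x y; simp [Finset.sum_add_distrib]; rfl
      map_smul' := by intro c x; simp [Finset.mul_sum]; rfl }
  have hkerL : LinearMap.ker M.mulVecLin = LinearMap.ker L := by
    ext x
    simp only [LinearMap.mem_ker, Matrix.mulVecLin_apply]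
    rw [hker x]
    constructor
    · rintro ⟨h1, h2, h3⟩
      simp only [L, LinearMap.coe_mk, AddHom.coe_mk, Prod.mk_eq_zero]
      exact ⟨h1, h2, funext fun v => h3 v.1 v.2⟩
    · intro h
      simp only [L, LinearMap.coe_mk, AddHom.coe_mk, Prod.mk_eq_zero] at h
      exact ⟨h.1, h.2.1, fun v hv => congrFun h.2.2 ⟨v, hv⟩⟩
  have hsurj : Function.Surjective L := by
    rintro ⟨c1, c2, f⟩
    refine ⟨fun v => if h : v ∈ S then f ⟨v, h⟩ else
      if v = Sum.inl u0 then c1 else if v = Sum.inr w0 then c2 else 0, ?_⟩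
    simp only [L, LinearMap.coe_mk, AddHom.coe_mk]
    refine Prod.ext ?_ (Prod.ext ?_ ?_)
    · simp only []
      rw [Finset.sum_eq_single u0]
      · simp [hu0]
      · intro u hu hne
        simp only [Finset.mem_filter] at hu
        simp [hu.2, hne]
      · intro h
        simp [hu0] at h
    · simp only []
      rw [Finset.sum_eq_single w0]
      · simp [hw0]
      · intro w hw hne
        simp only [Finset.mem_filter] at hw
        simp [hw.2, hne]
      · intro h
        simp [hw0] at h
    · funext v
      simp [v.2]
  have hrank := LinearMap.finrank_range_add_finrank_ker L
  rw [LinearMap.range_eq_top.2 hsurj, finrank_top] at hrank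
  have hcod : Module.finrank ℝ (ℝ × ℝ × (S → ℝ)) = 1 + (1 + S.card) := by
    simp [Module.finrank_prod]
  have hdom : Module.finrank ℝ ((Fin a ⊕ Fin b) → ℝ) = a + b := by
    simp
  rw [hcod, hdom] at hrank
  constructor
  · rw [hkerL]; omega
  · ext x
    simp only [SetLike.mem_coe, LinearMap.mem_ker, Matrix.mulVecLin_apply, Set.mem_setOf_eq]
    exact hker x
end

section
/- Let a, b ∈ ℕ with a ≥ 3, b ≥ 4, and a ≤ b. Then there exists a matrix M ∈ 𝓜(K_{a,b}) with dim ker(M) = 4 that does not satisfy the Strong Arnold Property; that is, there exists a non-zero symmetric matrix X with MX = 0 and X_{uv} = 0 whenever uv is an edge of K_{a,b} or u = v. -/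
open Matrix

namespace NoSAP

noncomputable def dA (a : ℕ) (i : Fin a) : ℝ := if (i : ℕ) < 2 then 0 else 1
noncomputable def dB (b : ℕ) (j : Fin b) : ℝ := if (j : ℕ) < 4 then 0 else 1

noncomputable def Mm (a b : ℕ) : Matrix (Fin a ⊕ Fin b) (Fin a ⊕ Fin b) ℝ :=
  Matrix.of fun p q =>
    match p, q with
    | .inl i, .inl j => if i = j then dA a i else 0
    | .inl _, .inr _ => -1
    | .inr _, .inl _ => -1
    | .inr i, .inr j => if i = j then dB b i else 0

variable {a b : ℕ}

lemma dA_nonneg (i : Fin a) : 0 ≤ dA a i := by unfold dA; positivity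
lemma dB_nonneg (j : Fin b) : 0 ≤ dB b j := by unfold dB; positivity

lemma Mm_symm : (Mm a b).IsSymm := by
  ext p q
  cases p <;> cases q <;> simp [Mm, transpose_apply, eq_comm] <;>
    rename_i i j <;> rcases eq_or_ne i j with h | h <;> simp [h]

lemma mulVec_inl (z : Fin a ⊕ Fin b → ℝ) (i : Fin a) :
    (Mm a b *ᵥ z) (Sum.inl i) = dA a i * z (Sum.inl i) - ∑ j, z (Sum.inr j) := by
  simp [Mm, mulVec, dotProduct, Fintype.sum_sum_type, ite_mul, Finset.sum_ite_eq,
    Finset.sum_neg_distrib, sub_eq_add_neg]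

lemma mulVec_inr (z : Fin a ⊕ Fin b → ℝ) (j : Fin b) :
    (Mm a b *ᵥ z) (Sum.inr j) = dB b j * z (Sum.inr j) - ∑ i, z (Sum.inl i) := by
  simp [Mm, mulVec, dotProduct, Fintype.sum_sum_type, ite_mul, Finset.sum_ite_eq,
    sub_eq_add_neg, add_comm]

lemma quad (z : Fin a ⊕ Fin b → ℝ) :
    z ⬝ᵥ (Mm a b *ᵥ z) =
      (∑ i, dA a i * z (Sum.inl i) ^ 2) + (∑ j, dB b j * z (Sum.inr j) ^ 2)
        - 2 * (∑ i, z (Sum.inl i)) * (∑ j, z (Sum.inr j)) := by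
  simp only [dotProduct, Fintype.sum_sum_type, mulVec_inl, mulVec_inr, mul_sub,
    Finset.sum_sub_distrib, ← Finset.sum_mul]
  rw [Finset.sum_congr rfl fun i (_ : i ∈ Finset.univ) =>
      (by ring : z (Sum.inl i) * (dA a i * z (Sum.inl i)) = dA a i * z (Sum.inl i) ^ 2),
    Finset.sum_congr rfl fun j (_ : j ∈ Finset.univ) =>
      (by ring : z (Sum.inr j) * (dB b j * z (Sum.inr j)) = dB b j * z (Sum.inr j) ^ 2)]
  ring

lemma sumA_eq (ha : 3 ≤ a) (f : Fin a → ℝ) (hf : ∀ i : Fin a, 2 ≤ (i : ℕ) → f i = 0) :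
    ∑ i : Fin a, f i = f ⟨0, by omega⟩ + f ⟨1, by omega⟩ := by
  rw [← Finset.sum_subset (Finset.subset_univ {(⟨0, by omega⟩ : Fin a), ⟨1, by omega⟩})
    (fun x _ hx => hf x (by simp [Fin.ext_iff] at hx; omega))]
  rw [Finset.sum_pair (by simp [Fin.ext_iff])]

lemma sumB_eq (hb : 4 ≤ b) (f : Fin b → ℝ) (hf : ∀ j : Fin b, 4 ≤ (j : ℕ) → f j = 0) :
    ∑ j : Fin b, f j = f ⟨0, by omega⟩ + f ⟨1, by omega⟩ + f ⟨2, by omega⟩ + f ⟨3, by omega⟩ := by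
  rw [← Finset.sum_subset (Finset.subset_univ
      {(⟨0, by omega⟩ : Fin b), ⟨1, by omega⟩, ⟨2, by omega⟩, ⟨3, by omega⟩})
    (fun x _ hx => hf x (by simp [Fin.ext_iff] at hx; omega))]
  rw [show ({(⟨0, by omega⟩ : Fin b), ⟨1, by omega⟩, ⟨2, by omega⟩, ⟨3, by omega⟩} : Finset (Fin b))
      = insert ⟨0, by omega⟩ (insert ⟨1, by omega⟩ (insert ⟨2, by omega⟩ {⟨3, by omega⟩})) from rfl]
  rw [Finset.sum_insert (by simp [Fin.ext_iff]), Finset.sum_insert (by simp [Fin.ext_iff]),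
    Finset.sum_insert (by simp [Fin.ext_iff]), Finset.sum_singleton]
  ring

lemma mem_ker_iff (ha : 3 ≤ a) (hb : 4 ≤ b) (z : Fin a ⊕ Fin b → ℝ) :
    Mm a b *ᵥ z = 0 ↔
      (∀ i : Fin a, 2 ≤ (i : ℕ) → z (Sum.inl i) = 0) ∧
      (∀ j : Fin b, 4 ≤ (j : ℕ) → z (Sum.inr j) = 0) ∧
      (∑ i : Fin a, z (Sum.inl i)) = 0 ∧ (∑ j : Fin b, z (Sum.inr j)) = 0 := by
  constructor
  · intro h
    have hA0 := congrFun h (Sum.inl ⟨0, by omega⟩)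
    have hB0 := congrFun h (Sum.inr ⟨0, by omega⟩)
    rw [mulVec_inl] at hA0
    rw [mulVec_inr] at hB0
    simp [dA, dB] at hA0 hB0
    refine ⟨fun i hi => ?_, fun j hj => ?_, hB0, hA0⟩
    · have := congrFun h (Sum.inl i)
      rw [mulVec_inl] at this
      simp [dA, Nat.not_lt.mpr hi, hA0] at this
      exact this
    · have := congrFun h (Sum.inr j)
      rw [mulVec_inr] at this
      simp [dB, Nat.not_lt.mpr hj, hB0] at this
      exact this
  · rintro ⟨h1, h2, h3, h4⟩
    funext p
    cases p with
    | inl i =>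
      rw [mulVec_inl, h4]
      rcases Nat.lt_or_ge (i : ℕ) 2 with hi | hi
      · simp [dA, hi]
      · simp [h1 i hi]
    | inr j =>
      rw [mulVec_inr, h3]
      rcases Nat.lt_or_ge (j : ℕ) 4 with hj | hj
      · simp [dB, hj]
      · simp [h2 j hj]

/-- inverse parametrization of the kernel -/
noncomputable def psi (a b : ℕ) (ha : 3 ≤ a) (hb : 4 ≤ b) (c : Fin 4 → ℝ) :
    Fin a ⊕ Fin b → ℝ := fun p =>
  match p with
  | .inl i => (if i = ⟨0, by omega⟩ then c 0 else 0) + (if i = ⟨1, by omega⟩ then -c 0 else 0)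
  | .inr j => (if j = ⟨0, by omega⟩ then c 1 else 0) + (if j = ⟨1, by omega⟩ then c 2 else 0)
      + (if j = ⟨2, by omega⟩ then c 3 else 0)
      + (if j = ⟨3, by omega⟩ then -(c 1 + c 2 + c 3) else 0)

lemma psi_mem (ha : 3 ≤ a) (hb : 4 ≤ b) (c : Fin 4 → ℝ) :
    Mm a b *ᵥ psi a b ha hb c = 0 := by
  rw [mem_ker_iff ha hb]
  refine ⟨fun i hi => ?_, fun j hj => ?_, ?_, ?_⟩
  · simp only [psi]
    rw [if_neg (by simp [Fin.ext_iff]; omega), if_neg (by simp [Fin.ext_iff]; omega)]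
    ring
  · simp only [psi]
    rw [if_neg (by simp [Fin.ext_iff]; omega), if_neg (by simp [Fin.ext_iff]; omega),
      if_neg (by simp [Fin.ext_iff]; omega), if_neg (by simp [Fin.ext_iff]; omega)]
    ring
  · simp only [psi, Finset.sum_add_distrib, Finset.sum_ite_eq' Finset.univ, Finset.mem_univ,
      if_true]
    ring
  · simp only [psi, Finset.sum_add_distrib, Finset.sum_ite_eq' Finset.univ, Finset.mem_univ,
      if_true]
    ring

noncomputable def psiLin (a b : ℕ) (ha : 3 ≤ a) (hb : 4 ≤ b) :
    (Fin 4 → ℝ) →ₗ[ℝ] (Fin a ⊕ Fin b → ℝ) where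
  toFun := psi a b ha hb
  map_add' c d := by
    funext p
    cases p <;> (simp only [psi, Pi.add_apply]; split_ifs <;> ring)
  map_smul' r c := by
    funext p
    cases p <;>
      (simp only [psi, Pi.smul_apply, smul_eq_mul, RingHom.id_apply]; split_ifs <;> ring)

lemma psi_inj (ha : 3 ≤ a) (hb : 4 ≤ b) :
    Function.Injective (psiLin a b ha hb) := by
  rw [← LinearMap.ker_eq_bot, LinearMap.ker_eq_bot']
  intro c hc
  have e0 := congrFun hc (Sum.inl ⟨0, by omega⟩)
  have e1 := congrFun hc (Sum.inr ⟨0, by omega⟩)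
  have e2 := congrFun hc (Sum.inr ⟨1, by omega⟩)
  have e3 := congrFun hc (Sum.inr ⟨2, by omega⟩)
  simp only [psiLin, LinearMap.coe_mk, AddHom.coe_mk, psi, Pi.zero_apply] at e0 e1 e2 e3
  simp only [Fin.ext_iff] at e0 e1 e2 e3
  norm_num at e0 e1 e2 e3
  funext t
  fin_cases t <;> simp <;> linarith

lemma psi_surj_on_ker (ha : 3 ≤ a) (hb : 4 ≤ b) (z : Fin a ⊕ Fin b → ℝ)
    (h1 : ∀ i : Fin a, 2 ≤ (i : ℕ) → z (Sum.inl i) = 0)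
    (h2 : ∀ j : Fin b, 4 ≤ (j : ℕ) → z (Sum.inr j) = 0)
    (h3 : (∑ i : Fin a, z (Sum.inl i)) = 0) (h4 : (∑ j : Fin b, z (Sum.inr j)) = 0) :
    psi a b ha hb ![z (Sum.inl ⟨0, by omega⟩), z (Sum.inr ⟨0, by omega⟩),
      z (Sum.inr ⟨1, by omega⟩), z (Sum.inr ⟨2, by omega⟩)] = z := by
  have hA := (sumA_eq ha (fun i => z (Sum.inl i)) h1).symm.trans h3
  have hB := (sumB_eq hb (fun j => z (Sum.inr j)) h2).symm.trans h4
  funext p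
  cases p with
  | inl i =>
    by_cases h0 : i = ⟨0, by omega⟩
    · subst h0; simp [psi, Fin.ext_iff]
    · by_cases h1' : i = ⟨1, by omega⟩
      · subst h1'
        simp only [psi, if_neg (show (⟨1, by omega⟩ : Fin a) ≠ ⟨0, by omega⟩ by
          simp [Fin.ext_iff]), if_pos rfl]
        simp only [Matrix.cons_val_zero]
        simp
        linarith
      · simp only [psi, if_neg h0, if_neg h1']
        simp only [Fin.ext_iff] at h0 h1'
        rw [h1 i (by omega)]
        ring
  | inr j =>
    by_cases e0 : j = ⟨0, by omega⟩
    · subst e0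
      simp only [psi, if_pos rfl, if_neg (show (⟨0, by omega⟩ : Fin b) ≠ ⟨1, by omega⟩ by
        simp [Fin.ext_iff]), if_neg (show (⟨0, by omega⟩ : Fin b) ≠ ⟨2, by omega⟩ by
        simp [Fin.ext_iff]), if_neg (show (⟨0, by omega⟩ : Fin b) ≠ ⟨3, by omega⟩ by
        simp [Fin.ext_iff])]
      simp
    · by_cases e1 : j = ⟨1, by omega⟩
      · subst e1
        simp only [psi, if_pos rfl, if_neg (show (⟨1, by omega⟩ : Fin b) ≠ ⟨0, by omega⟩ by
          simp [Fin.ext_iff]), if_neg (show (⟨1, by omega⟩ : Fin b) ≠ ⟨2, by omega⟩ by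
          simp [Fin.ext_iff]), if_neg (show (⟨1, by omega⟩ : Fin b) ≠ ⟨3, by omega⟩ by
          simp [Fin.ext_iff])]
        simp
      · by_cases e2 : j = ⟨2, by omega⟩
        · subst e2
          simp only [psi, if_pos rfl, if_neg (show (⟨2, by omega⟩ : Fin b) ≠ ⟨0, by omega⟩ by
            simp [Fin.ext_iff]), if_neg (show (⟨2, by omega⟩ : Fin b) ≠ ⟨1, by omega⟩ by
            simp [Fin.ext_iff]), if_neg (show (⟨2, by omega⟩ : Fin b) ≠ ⟨3, by omega⟩ by
            simp [Fin.ext_iff])]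
          simp
        · by_cases e3 : j = ⟨3, by omega⟩
          · subst e3
            simp only [psi, if_pos rfl, if_neg (show (⟨3, by omega⟩ : Fin b) ≠ ⟨0, by omega⟩ by
              simp [Fin.ext_iff]), if_neg (show (⟨3, by omega⟩ : Fin b) ≠ ⟨1, by omega⟩ by
              simp [Fin.ext_iff]), if_neg (show (⟨3, by omega⟩ : Fin b) ≠ ⟨2, by omega⟩ by
              simp [Fin.ext_iff])]
            simp only [Matrix.cons_val_one, Matrix.head_cons, Matrix.cons_val_two,
              Matrix.tail_cons, Matrix.cons_val_three]
            simp
            linarith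
          · simp only [psi, if_neg e0, if_neg e1, if_neg e2, if_neg e3]
            simp only [Fin.ext_iff] at e0 e1 e2 e3
            rw [h2 j (by omega)]
            ring

lemma ker_eq_range (ha : 3 ≤ a) (hb : 4 ≤ b) :
    LinearMap.ker (Mm a b).mulVecLin = LinearMap.range (psiLin a b ha hb) := by
  ext z
  rw [LinearMap.mem_ker, LinearMap.mem_range, mulVecLin_apply, mem_ker_iff ha hb]
  constructor
  · rintro ⟨h1, h2, h3, h4⟩
    exact ⟨_, psi_surj_on_ker ha hb z h1 h2 h3 h4⟩
  · rintro ⟨c, rfl⟩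
    exact (mem_ker_iff ha hb _).mp (psi_mem ha hb c)

lemma finrank_ker (ha : 3 ≤ a) (hb : 4 ≤ b) :
    Module.finrank ℝ (LinearMap.ker (Mm a b).mulVecLin) = 4 := by
  rw [ker_eq_range ha hb, LinearMap.finrank_range_of_inj (psi_inj ha hb)]
  simp

lemma Mm_isHermitian : (Mm a b).IsHermitian := by
  have h := Mm_symm (a := a) (b := b)
  rw [Matrix.IsSymm] at h
  rw [Matrix.IsHermitian, conjTranspose]
  ext p q
  rw [Matrix.map_apply, star_trivial]
  exact congrFun (congrFun h p) q

lemma sum_dA_le (a : ℕ) : ∑ i : Fin a, dA a i ≤ (a : ℝ) := by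
  calc ∑ i : Fin a, dA a i ≤ ∑ _i : Fin a, (1 : ℝ) := by
        refine Finset.sum_le_sum fun i _ => ?_
        unfold dA; split_ifs <;> norm_num
    _ = a := by simp

lemma sum_dB_le (b : ℕ) : ∑ j : Fin b, dB b j ≤ (b : ℝ) := by
  calc ∑ j : Fin b, dB b j ≤ ∑ _j : Fin b, (1 : ℝ) := by
        refine Finset.sum_le_sum fun j _ => ?_
        unfold dB; split_ifs <;> norm_num
    _ = b := by simp

lemma exists_neg_eigenvalue (ha : 3 ≤ a) (hb : 4 ≤ b) :
    ∃ i, (Mm_isHermitian (a := a) (b := b)).eigenvalues i < 0 := by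
  by_contra hcon
  push_neg at hcon
  have hpsd := (Mm_isHermitian (a := a) (b := b)).posSemidef_iff_eigenvalues_nonneg.mpr hcon
  have h1 := hpsd.dotProduct_mulVec_nonneg (fun _ => (1 : ℝ))
  have hq := quad (a := a) (b := b) (fun _ => (1 : ℝ))
  have hstar : star (fun _ : Fin a ⊕ Fin b => (1 : ℝ)) = fun _ => (1 : ℝ) := rfl
  rw [hstar, hq] at h1
  have e1 : (∑ i : Fin a, (1 : ℝ)) = a := by simp
  have e2 : (∑ j : Fin b, (1 : ℝ)) = b := by simp
  rw [e1, e2] at h1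
  simp only [one_pow, mul_one] at h1
  have l1 := sum_dA_le a
  have l2 := sum_dB_le b
  have hA : (3 : ℝ) ≤ a := by exact_mod_cast ha
  have hB : (4 : ℝ) ≤ b := by exact_mod_cast hb
  nlinarith [h1, l1, l2]

lemma negcomb (u w li lj : ℝ) (hli : li < 0) (hlj : lj < 0)
    (h : ¬(u = 0 ∧ w = 0)) : u ^ 2 * li + w ^ 2 * lj < 0 := by
  rcases not_and_or.mp h with h0 | h1
  · have : 0 < u ^ 2 := by positivity
    nlinarith [sq_nonneg w]
  · have : 0 < w ^ 2 := by positivity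
    nlinarith [sq_nonneg u]

lemma eig_unique (ha : 3 ≤ a) (hb : 4 ≤ b) (i j : Fin a ⊕ Fin b)
    (hi : (Mm_isHermitian (a := a) (b := b)).eigenvalues i < 0)
    (hj : (Mm_isHermitian (a := a) (b := b)).eigenvalues j < 0) : i = j := by
  by_contra hij
  set v := (Mm_isHermitian (a := a) (b := b)).eigenvectorBasis with hv
  have hdot : ∀ k l, (⇑(v k) ⬝ᵥ ⇑(v l)) = if k = l then (1 : ℝ) else 0 := by
    intro k l
    have h := orthonormal_iff_ite.mp v.orthonormal k l
    rw [EuclideanSpace.inner_eq_star_dotProduct, star_trivial, dotProduct_comm] at h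
    exact h
  -- the hyperplane where the quadratic form is PSD
  set L : EuclideanSpace ℝ (Fin a ⊕ Fin b) →ₗ[ℝ] ℝ :=
    { toFun := fun z => ∑ i : Fin a, z (Sum.inl i)
      map_add' := fun x y => by simp [Finset.sum_add_distrib]
      map_smul' := fun r x => by simp [Finset.mul_sum] } with hL
  set W := LinearMap.ker L with hWdef
  set w : Fin 2 → EuclideanSpace ℝ (Fin a ⊕ Fin b) := ![v i, v j] with hw
  have hwinj : Function.Injective ![i, j] := by
    intro x y hxy
    fin_cases x <;> fin_cases y <;> simp_all <;> exact absurd hxy (Ne.symm hij)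
  have hli : LinearIndependent ℝ w := by
    have h1 := (v.orthonormal.linearIndependent).comp ![i, j] hwinj
    have : v ∘ ![i, j] = w := by
      funext t; fin_cases t <;> rfl
    rwa [this] at h1
  set U := Submodule.span ℝ (Set.range w) with hU
  have hUrank : Module.finrank ℝ U = 2 := by
    rw [finrank_span_eq_card hli]
    simp
  have hfull : Module.finrank ℝ (EuclideanSpace ℝ (Fin a ⊕ Fin b)) = a + b := by
    simp [finrank_euclideanSpace]
  have hrange : Module.finrank ℝ (LinearMap.range L) ≤ 1 := by
    simpa using Submodule.finrank_le (LinearMap.range L)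
  have hrk := LinearMap.finrank_range_add_finrank_ker L
  rw [hfull, ← hWdef] at hrk
  have hsup : Module.finrank ℝ ↥(U ⊔ W) ≤ a + b := by
    simpa [hfull] using Submodule.finrank_le (U ⊔ W)
  have hinf := Submodule.finrank_sup_add_finrank_inf_eq U W
  have hpos : 0 < Module.finrank ℝ ↥(U ⊓ W) := by omega
  obtain ⟨z, hz⟩ := Module.finrank_pos_iff_exists_ne_zero.mp hpos
  have hzU : (z : EuclideanSpace ℝ (Fin a ⊕ Fin b)) ∈ U := z.2.1
  have hzW : (z : EuclideanSpace ℝ (Fin a ⊕ Fin b)) ∈ W := z.2.2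
  have hzne : (z : EuclideanSpace ℝ (Fin a ⊕ Fin b)) ≠ 0 := by
    intro h
    exact hz (Subtype.ext h)
  obtain ⟨c, hc⟩ := (Submodule.mem_span_range_iff_exists_fun ℝ).mp hzU
  rw [Fin.sum_univ_two] at hc
  set x : Fin a ⊕ Fin b → ℝ := ⇑(z : EuclideanSpace ℝ (Fin a ⊕ Fin b)) with hx
  have hc' : c 0 • (⇑(v i) : Fin a ⊕ Fin b → ℝ) + c 1 • ⇑(v j) = x := congrArg WithLp.ofLp hc
  have hcne : ¬(c 0 = 0 ∧ c 1 = 0) := by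
    rintro ⟨h0, h1⟩
    apply hzne
    have : x = 0 := by rw [← hc', h0, h1]; simp
    exact (WithLp.ofLp_eq_zero (p := 2)).mp this
  -- value of the quadratic form, spectrally
  have hq1 : x ⬝ᵥ (Mm a b *ᵥ x) =
      c 0 ^ 2 * (Mm_isHermitian (a := a) (b := b)).eigenvalues i
        + c 1 ^ 2 * (Mm_isHermitian (a := a) (b := b)).eigenvalues j := by
    rw [← hc']
    rw [Matrix.mulVec_add, Matrix.mulVec_smul, Matrix.mulVec_smul,
      (Mm_isHermitian (a := a) (b := b)).mulVec_eigenvectorBasis,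
      (Mm_isHermitian (a := a) (b := b)).mulVec_eigenvectorBasis]
    simp only [dotProduct_add, add_dotProduct, dotProduct_smul,
      smul_dotProduct, smul_eq_mul, Pi.smul_apply]
    rw [hdot i i, hdot i j, hdot j i, hdot j j]
    simp [hij, Ne.symm hij]
    ring
  set lami : ℝ := (Mm_isHermitian (a := a) (b := b)).eigenvalues i with hlami
  set lamj : ℝ := (Mm_isHermitian (a := a) (b := b)).eigenvalues j with hlamj
  clear_value lami lamj
  have hi' : lami < 0 := hi
  have hj' : lamj < 0 := hj
  clear hi hj
  have hneg : x ⬝ᵥ (Mm a b *ᵥ x) < 0 := by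
    rw [hq1]
    exact negcomb _ _ _ _ hi' hj' hcne
  -- but on W the form is nonnegative
  have hLz : ∑ i : Fin a, x (Sum.inl i) = 0 := by
    have h := LinearMap.mem_ker.mp hzW
    rw [hL] at h
    exact h
  have hnonneg : 0 ≤ x ⬝ᵥ (Mm a b *ᵥ x) := by
    rw [quad, hLz]
    simp only [mul_zero, zero_mul, sub_zero]
    apply add_nonneg <;>
      exact Finset.sum_nonneg fun k _ => mul_nonneg (by first | exact dA_nonneg _ | exact dB_nonneg _) (sq_nonneg _)
  linarith

noncomputable def Pv (a b : ℕ) (hb : 4 ≤ b) : Fin a ⊕ Fin b → ℝ := fun p =>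
  match p with
  | .inl _ => 0
  | .inr j => (if j = ⟨0, by omega⟩ then 1 else 0) + (if j = ⟨3, by omega⟩ then -1 else 0)

noncomputable def Qv (a b : ℕ) (hb : 4 ≤ b) : Fin a ⊕ Fin b → ℝ := fun p =>
  match p with
  | .inl _ => 0
  | .inr j => (if j = ⟨1, by omega⟩ then 1 else 0) + (if j = ⟨2, by omega⟩ then -1 else 0)

lemma Pv_ker (ha : 3 ≤ a) (hb : 4 ≤ b) : Mm a b *ᵥ Pv a b hb = 0 := by
  rw [mem_ker_iff ha hb]
  refine ⟨fun i hi => rfl, fun j hj => ?_, by simp [Pv], ?_⟩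
  · simp only [Pv]
    rw [if_neg (by simp [Fin.ext_iff]; omega), if_neg (by simp [Fin.ext_iff]; omega)]
    ring
  · simp only [Pv, Finset.sum_add_distrib, Finset.sum_ite_eq' Finset.univ, Finset.mem_univ,
      if_true]
    ring

lemma Qv_ker (ha : 3 ≤ a) (hb : 4 ≤ b) : Mm a b *ᵥ Qv a b hb = 0 := by
  rw [mem_ker_iff ha hb]
  refine ⟨fun i hi => rfl, fun j hj => ?_, by simp [Qv], ?_⟩
  · simp only [Qv]
    rw [if_neg (by simp [Fin.ext_iff]; omega), if_neg (by simp [Fin.ext_iff]; omega)]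
    ring
  · simp only [Qv, Finset.sum_add_distrib, Finset.sum_ite_eq' Finset.univ, Finset.mem_univ,
      if_true]
    ring

noncomputable def Xm (a b : ℕ) (hb : 4 ≤ b) : Matrix (Fin a ⊕ Fin b) (Fin a ⊕ Fin b) ℝ :=
  Matrix.of fun p q => Pv a b hb p * Qv a b hb q + Qv a b hb p * Pv a b hb q

lemma Xm_ne_zero (ha : 3 ≤ a) (hb : 4 ≤ b) : Xm a b hb ≠ 0 := by
  intro h
  have h1 := congrFun (congrFun h (Sum.inr ⟨0, by omega⟩)) (Sum.inr ⟨1, by omega⟩)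
  simp only [Xm, Matrix.of_apply, Pv, Qv, Matrix.zero_apply] at h1
  norm_num [Fin.ext_iff] at h1

lemma Xm_symm (hb : 4 ≤ b) : (Xm a b hb).IsSymm := by
  ext p q
  simp only [Xm, Matrix.transpose_apply, Matrix.of_apply]
  ring

lemma Xm_mul (ha : 3 ≤ a) (hb : 4 ≤ b) : Mm a b * Xm a b hb = 0 := by
  ext p q
  have hP := congrFun (Pv_ker ha hb) p
  have hQ := congrFun (Qv_ker ha hb) p
  simp only [Matrix.mulVec, dotProduct, Pi.zero_apply] at hP hQ
  simp only [Matrix.mul_apply, Xm, Matrix.of_apply, Matrix.zero_apply, mul_add,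
    Finset.sum_add_distrib]
  have e1 : ∑ r, Mm a b p r * (Pv a b hb r * Qv a b hb q)
      = (∑ r, Mm a b p r * Pv a b hb r) * Qv a b hb q := by
    rw [Finset.sum_mul]; exact Finset.sum_congr rfl fun r _ => by ring
  have e2 : ∑ r, Mm a b p r * (Qv a b hb r * Pv a b hb q)
      = (∑ r, Mm a b p r * Qv a b hb r) * Pv a b hb q := by
    rw [Finset.sum_mul]; exact Finset.sum_congr rfl fun r _ => by ring
  rw [e1, e2, hP, hQ]
  ring

lemma Xm_edges (hb : 4 ≤ b) (u v : Fin a ⊕ Fin b)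
    (huv : (completeBipartiteGraph (Fin a) (Fin b)).Adj u v) : Xm a b hb u v = 0 := by
  cases u with
  | inl i =>
    cases v with
    | inl j => simp at huv
    | inr j =>
      simp only [Xm, Matrix.of_apply]
      show Pv a b hb (Sum.inl i) * _ + Qv a b hb (Sum.inl i) * _ = 0
      simp [Pv, Qv]
  | inr i =>
    cases v with
    | inl j =>
      simp only [Xm, Matrix.of_apply]
      show _ * Qv a b hb (Sum.inl j) + _ * Pv a b hb (Sum.inl j) = 0
      simp [Pv, Qv]
    | inr j => simp at huv

lemma Xm_diag (hb : 4 ≤ b) (u : Fin a ⊕ Fin b) : Xm a b hb u u = 0 := by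
  cases u with
  | inl i => simp [Xm, Pv, Qv]
  | inr j =>
    simp only [Xm, Matrix.of_apply, Pv, Qv]
    simp only [Fin.ext_iff]
    split_ifs <;> first | omega | norm_num

end NoSAP

/-- Observation: for every `3 ≤ a ≤ b` with `4 ≤ b` there is
`M ∈ 𝓜(K_{a,b})` of corank `4` that does not satisfy the Strong Arnold
Property. -/
theorem bipartite_corank_four_no_SAP (a b : ℕ) (ha : 3 ≤ a) (hb : 4 ≤ b)
    (hab : a ≤ b) :
    ∃ M : Matrix (Fin a ⊕ Fin b) (Fin a ⊕ Fin b) ℝ,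
      InMG (completeBipartiteGraph (Fin a) (Fin b)) M ∧
      Module.finrank ℝ (LinearMap.ker M.mulVecLin) = 4 ∧
      ∃ X : Matrix (Fin a ⊕ Fin b) (Fin a ⊕ Fin b) ℝ,
        X ≠ 0 ∧ X.IsSymm ∧ M * X = 0 ∧
        (∀ u v, (completeBipartiteGraph (Fin a) (Fin b)).Adj u v → X u v = 0) ∧
        (∀ u, X u u = 0) := by
  refine ⟨NoSAP.Mm a b, ⟨NoSAP.Mm_symm, ?_, ?_, NoSAP.Mm_isHermitian, ?_⟩,
    NoSAP.finrank_ker ha hb, NoSAP.Xm a b hb, NoSAP.Xm_ne_zero ha hb, NoSAP.Xm_symm hb,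
    NoSAP.Xm_mul ha hb, NoSAP.Xm_edges hb, NoSAP.Xm_diag hb⟩
  · intro u v huv
    cases u with
    | inl i =>
      cases v with
      | inl j => simp at huv
      | inr j => show (-1 : ℝ) < 0; norm_num
    | inr i =>
      cases v with
      | inl j => show (-1 : ℝ) < 0; norm_num
      | inr j => simp at huv
  · intro u v hne hadj
    cases u with
    | inl i =>
      cases v with
      | inl j =>
        have hij : i ≠ j := fun h => hne (by rw [h])
        show (if i = j then NoSAP.dA a i else 0) = 0
        rw [if_neg hij]
      | inr j => exact absurd (by simp) hadj
    | inr i =>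
      cases v with
      | inl j => exact absurd (by simp) hadj
      | inr j =>
        have hij : i ≠ j := fun h => hne (by rw [h])
        show (if i = j then NoSAP.dB b i else 0) = 0
        rw [if_neg hij]
  · obtain ⟨i, hi⟩ := NoSAP.exists_neg_eigenvalue ha hb
    rw [Finset.card_eq_one]
    refine ⟨i, ?_⟩
    ext j
    simp only [Finset.mem_filter, Finset.mem_univ, true_and, Finset.mem_singleton]
    exact ⟨fun hj => NoSAP.eig_unique ha hb j i hj hi, fun h => h ▸ hi⟩
end

section
/- Let G be the simple graph on the vertex set {1,2,3,4,5,6,7} whose complement is the disjoint union of the triangle on {1,2,3} and the star with center 7 and leaves 4,5,6 (equivalently: uv is an edge of G for u ≠ v except for the pairs {1,2},{1,3},{2,3},{4,7},{5,7},{6,7}). Then there is no matrix M ∈ 𝓜(G) with dim ker(M) = 5 for which the all-ones vector 𝟙 is an eigenvector of M. (Consequently, no CdV matrix for G of corank μ(G) = 5 has 𝟙 as its Perron–Frobenius eigenvector, answering a question of van der Holst, Lovász, and Schrijver negatively.) -/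
open Matrix

/-- The graph on vertices `0, …, 6` (standing for `1, …, 7`) whose complement is
the disjoint union of the triangle on `{0,1,2}` and the star with center `6` and
leaves `3,4,5`: distinct `u, v` are adjacent except for the pairs
`{0,1}, {0,2}, {1,2}, {3,6}, {4,6}, {5,6}`. -/
def G7 : SimpleGraph (Fin 7) :=
  SimpleGraph.fromRel (fun u v =>
    ({u, v} : Finset (Fin 7)) ∉
      ({{0, 1}, {0, 2}, {1, 2}, {3, 6}, {4, 6}, {5, 6}} :
        Finset (Finset (Fin 7))))

lemma star_branch (w0 u3 u4 u5 u6 : ℝ)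
    (hs : u3 + u4 + u5 + u6 = 0)
    (l3 : u3 * w0 < 0) (l4 : u4 * w0 < 0) (l5 : u5 * w0 < 0) (l6 : u6 * w0 < 0) : False := by
  have key : (u3 + u4 + u5 + u6) * w0 = 0 := by rw [hs]; ring
  nlinarith [key]

/-- The hyperbolic (corank) case. -/
lemma hyp (u0 u1 u2 u3 u4 u5 u6 w0 w1 w2 w3 w4 w5 w6 : ℝ)
    (hsu : u0 + u1 + u2 + u3 + u4 + u5 + u6 = 0)
    (hsw : w0 + w1 + w2 + w3 + w4 + w5 + w6 = 0)
    (e01 : u0 * w1 + u1 * w0 = 0)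
    (e02 : u0 * w2 + u2 * w0 = 0)
    (e12 : u1 * w2 + u2 * w1 = 0)
    (l03 : u0 * w3 + u3 * w0 < 0)
    (l04 : u0 * w4 + u4 * w0 < 0)
    (l05 : u0 * w5 + u5 * w0 < 0)
    (l06 : u0 * w6 + u6 * w0 < 0)
    (l13 : u1 * w3 + u3 * w1 < 0)
    (l23 : u2 * w3 + u3 * w2 < 0) : False := by
  have p0 : ¬(u0 = 0 ∧ w0 = 0) := by
    rintro ⟨h1, h2⟩; rw [h1, h2] at l03; simp at l03
  have p1 : ¬(u1 = 0 ∧ w1 = 0) := by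
    rintro ⟨h1, h2⟩; rw [h1, h2] at l13; simp at l13
  have p2 : ¬(u2 = 0 ∧ w2 = 0) := by
    rintro ⟨h1, h2⟩; rw [h1, h2] at l23; simp at l23
  have huw : u0 = 0 ∨ w0 = 0 := by
    by_contra h
    push_neg at h
    obtain ⟨hu0, hw0⟩ := h
    have key : u1 * u2 * w0 = 0 := by
      linear_combination (-u0 / 2) * e12 + (u1 / 2) * e02 + (u2 / 2) * e01
    have h12 : u1 * u2 = 0 := by
      rcases mul_eq_zero.mp key with h | h
      · exact h
      · exact absurd h hw0
    rcases mul_eq_zero.mp h12 with h1 | h2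
    · have hw1 : w1 = 0 := by
        have h' : u0 * w1 = 0 := by linear_combination e01 - w0 * h1
        exact (mul_eq_zero.mp h').resolve_left hu0
      exact p1 ⟨h1, hw1⟩
    · have hw2 : w2 = 0 := by
        have h' : u0 * w2 = 0 := by linear_combination e02 - w0 * h2
        exact (mul_eq_zero.mp h').resolve_left hu0
      exact p2 ⟨h2, hw2⟩
  rcases huw with h | h
  · have hw0 : w0 ≠ 0 := fun hw => p0 ⟨h, hw⟩
    have hu1 : u1 = 0 := by
      have h' : u1 * w0 = 0 := by linear_combination e01 - w1 * h
      exact (mul_eq_zero.mp h').resolve_right hw0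
    have hu2 : u2 = 0 := by
      have h' : u2 * w0 = 0 := by linear_combination e02 - w2 * h
      exact (mul_eq_zero.mp h').resolve_right hw0
    rw [h] at l03 l04 l05 l06
    simp only [zero_mul, zero_add] at l03 l04 l05 l06
    exact star_branch w0 u3 u4 u5 u6 (by linarith) l03 l04 l05 l06
  · have hu0 : u0 ≠ 0 := fun hu => p0 ⟨hu, h⟩
    have hw1 : w1 = 0 := by
      have h' : u0 * w1 = 0 := by linear_combination e01 - u1 * h
      exact (mul_eq_zero.mp h').resolve_left hu0
    have hw2 : w2 = 0 := by
      have h' : u0 * w2 = 0 := by linear_combination e02 - u2 * h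
      exact (mul_eq_zero.mp h').resolve_left hu0
    rw [h] at l03 l04 l05 l06
    simp only [mul_zero, add_zero] at l03 l04 l05 l06
    exact star_branch u0 w3 w4 w5 w6 (by linarith)
      (by linarith [l03]) (by linarith [l04]) (by linarith [l05]) (by linarith [l06])

/-- The constant case: nonedge products equal `k*k ≠ 0`, with sum zero. -/
lemma const_case (z0 z1 z2 z3 z4 z5 z6 : ℝ) (k : ℝ)
    (hs : z0 + z1 + z2 + z3 + z4 + z5 + z6 = 0)
    (e01 : z0 * z1 = k * k) (e02 : z0 * z2 = k * k) (e12 : z1 * z2 = k * k)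
    (e36 : z3 * z6 = k * k) (e46 : z4 * z6 = k * k) (e56 : z5 * z6 = k * k)
    (hk : k ≠ 0) : False := by
  have hkk : (0 : ℝ) < k * k := mul_self_pos.mpr hk
  have hz0 : z0 ≠ 0 := by intro h; rw [h, zero_mul] at e01; linarith
  have hz1 : z1 ≠ 0 := by intro h; rw [h, zero_mul] at e12; linarith
  have hz6 : z6 ≠ 0 := by intro h; rw [h, mul_zero] at e36; linarith
  have h12 : z1 = z2 := mul_left_cancel₀ hz0 (e01.trans e02.symm)
  have h01 : z0 = z1 := by
    apply mul_right_cancel₀ hz1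
    rw [e01]
    linear_combination -e12 - z1 * h12
  have h34 : z3 = z4 := mul_right_cancel₀ hz6 (e36.trans e46.symm)
  have h35 : z3 = z5 := mul_right_cancel₀ hz6 (e36.trans e56.symm)
  have hsum : 3 * z0 + 3 * z3 + z6 = 0 := by linarith
  have hz00 : z0 * z0 = k * k := by linear_combination e01 + z0 * h01
  have key : z0 * z0 + 3 * (z0 * z3) + 3 * (z3 * z3) = 0 := by
    linear_combination hz00 - e36 + z3 * hsum
  nlinarith [key, sq_nonneg (z0 + 2 * z3), hz00, hkk]

lemma zero_case_gt (z0 z3 z4 z6 : ℝ)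
    (e36 : z3 * z6 = 0) (l06 : 0 < z0 * z6) (l34 : 0 < z3 * z4) : False := by
  have hz3 : z3 ≠ 0 := by intro h; rw [h, zero_mul] at l34; linarith
  have hz6 : z6 = 0 := (mul_eq_zero.mp e36).resolve_left hz3
  rw [hz6, mul_zero] at l06; linarith

lemma zero_case_lt (z0 z3 z4 z6 : ℝ)
    (e36 : z3 * z6 = 0) (l06 : z0 * z6 < 0) (l34 : z3 * z4 < 0) : False := by
  have hz3 : z3 ≠ 0 := by intro h; rw [h, zero_mul] at l34; linarith
  have hz6 : z6 = 0 := (mul_eq_zero.mp e36).resolve_left hz3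
  rw [hz6, mul_zero] at l06; linarith

/-- The key algebraic lemma. -/
lemma key_lemma (x y : Fin 7 → ℝ) (μ : ℝ)
    (hxy : ∑ a, x a * y a = 0)
    (hx : 0 < ∑ a, x a * x a)
    (hy : 0 < ∑ a, y a * y a)
    (heig : ∀ a, (∑ b, x b) * x a - (∑ b, y b) * y a = μ)
    (e01 : x 0 * x 1 = y 0 * y 1) (e02 : x 0 * x 2 = y 0 * y 2) (e12 : x 1 * x 2 = y 1 * y 2)
    (e36 : x 3 * x 6 = y 3 * y 6) (e46 : x 4 * x 6 = y 4 * y 6) (e56 : x 5 * x 6 = y 5 * y 6)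
    (l03 : x 0 * x 3 < y 0 * y 3) (l04 : x 0 * x 4 < y 0 * y 4) (l05 : x 0 * x 5 < y 0 * y 5)
    (l06 : x 0 * x 6 < y 0 * y 6) (l13 : x 1 * x 3 < y 1 * y 3) (l23 : x 2 * x 3 < y 2 * y 3)
    (l34 : x 3 * x 4 < y 3 * y 4) : False := by
  have hXs : ∑ b, x b = x 0 + x 1 + x 2 + x 3 + x 4 + x 5 + x 6 := Fin.sum_univ_seven x
  have hYs : ∑ b, y b = y 0 + y 1 + y 2 + y 3 + y 4 + y 5 + y 6 := Fin.sum_univ_seven y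
  by_cases hX0 : (∑ b, x b) = 0 <;> by_cases hY0 : (∑ b, y b) = 0
  · -- hyperbolic case
    rw [hXs] at hX0
    rw [hYs] at hY0
    exact hyp (x 0 + y 0) (x 1 + y 1) (x 2 + y 2) (x 3 + y 3) (x 4 + y 4) (x 5 + y 5) (x 6 + y 6)
      (x 0 - y 0) (x 1 - y 1) (x 2 - y 2) (x 3 - y 3) (x 4 - y 4) (x 5 - y 5) (x 6 - y 6)
      (by linarith) (by linarith)
      (by linear_combination 2 * e01) (by linear_combination 2 * e02)
      (by linear_combination 2 * e12)
      (by linarith [l03]) (by linarith [l04]) (by linarith [l05]) (by linarith [l06])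
      (by linarith [l13]) (by linarith [l23])
  · -- X = 0, Y ≠ 0 : y is constant
    have hk : ∀ a, y a = -μ / (∑ b, y b) := by
      intro a
      rw [eq_div_iff hY0]
      have h := heig a
      rw [hX0] at h
      linear_combination -h
    have hk2 : ∀ a b, y a * y b = (-μ / (∑ b, y b)) * (-μ / (∑ b, y b)) := fun a b => by
      rw [hk a, hk b]
    set k : ℝ := -μ / (∑ b, y b) with hkdef
    by_cases hkk : k = 0
    · have h36 : x 3 * x 6 = 0 := by rw [e36, hk2 3 6, hkk, mul_zero]
      have h06 : x 0 * x 6 < 0 := by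
        have := hk2 0 6; rw [hkk, mul_zero] at this; rw [this] at l06; exact l06
      have h34 : x 3 * x 4 < 0 := by
        have := hk2 3 4; rw [hkk, mul_zero] at this; rw [this] at l34; exact l34
      exact zero_case_lt (x 0) (x 3) (x 4) (x 6) h36 h06 h34
    · rw [hXs] at hX0
      exact const_case (x 0) (x 1) (x 2) (x 3) (x 4) (x 5) (x 6) k hX0
        (e01.trans (hk2 0 1)) (e02.trans (hk2 0 2)) (e12.trans (hk2 1 2))
        (e36.trans (hk2 3 6)) (e46.trans (hk2 4 6)) (e56.trans (hk2 5 6)) hkk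
  · -- X ≠ 0, Y = 0 : x is constant
    have hk : ∀ a, x a = μ / (∑ b, x b) := by
      intro a
      rw [eq_div_iff hX0]
      have h := heig a
      rw [hY0] at h
      linear_combination h
    have hk2 : ∀ a b, x a * x b = (μ / (∑ b, x b)) * (μ / (∑ b, x b)) := fun a b => by
      rw [hk a, hk b]
    set k : ℝ := μ / (∑ b, x b) with hkdef
    by_cases hkk : k = 0
    · have h36 : y 3 * y 6 = 0 := by rw [← e36, hk2 3 6, hkk, mul_zero]
      have h06 : 0 < y 0 * y 6 := by
        have := hk2 0 6; rw [hkk, mul_zero] at this; rw [this] at l06; exact l06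
      have h34 : 0 < y 3 * y 4 := by
        have := hk2 3 4; rw [hkk, mul_zero] at this; rw [this] at l34; exact l34
      exact zero_case_gt (y 0) (y 3) (y 4) (y 6) h36 h06 h34
    · rw [hYs] at hY0
      exact const_case (y 0) (y 1) (y 2) (y 3) (y 4) (y 5) (y 6) k hY0
        (e01.symm.trans (hk2 0 1)) (e02.symm.trans (hk2 0 2)) (e12.symm.trans (hk2 1 2))
        (e36.symm.trans (hk2 3 6)) (e46.symm.trans (hk2 4 6)) (e56.symm.trans (hk2 5 6)) hkk
  · -- X ≠ 0, Y ≠ 0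
    have h1 : (∑ b, x b) * (∑ a, x a * x a) - (∑ b, y b) * (∑ a, x a * y a)
        = μ * (∑ b, x b) := by
      rw [Finset.mul_sum, Finset.mul_sum, ← Finset.sum_sub_distrib, Finset.mul_sum]
      exact Finset.sum_congr rfl fun a _ => by linear_combination x a * heig a
    have h2 : (∑ b, x b) * (∑ a, y a * x a) - (∑ b, y b) * (∑ a, y a * y a)
        = μ * (∑ b, y b) := by
      rw [Finset.mul_sum, Finset.mul_sum, ← Finset.sum_sub_distrib, Finset.mul_sum]
      exact Finset.sum_congr rfl fun a _ => by linear_combination y a * heig a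
    have hyx : ∑ a, y a * x a = 0 := by
      rw [← hxy]; exact Finset.sum_congr rfl fun a _ => mul_comm _ _
    rw [hxy, mul_zero] at h1
    rw [hyx, mul_zero] at h2
    have hμ1 : μ = ∑ a, x a * x a := by
      have h3 : (∑ b, x b) * ((∑ a, x a * x a) - μ) = 0 := by linear_combination h1
      have := (mul_eq_zero.mp h3).resolve_left hX0
      linarith
    have hμ2 : μ = -(∑ a, y a * y a) := by
      have h3 : (∑ b, y b) * ((∑ a, y a * y a) + μ) = 0 := by linear_combination -h2
      have := (mul_eq_zero.mp h3).resolve_left hY0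
      linarith
    linarith
lemma G7_adj (u v : Fin 7)
    (h : ({u, v} : Finset (Fin 7)) ∉
      ({{0, 1}, {0, 2}, {1, 2}, {3, 6}, {4, 6}, {5, 6}} : Finset (Finset (Fin 7))))
    (hne : u ≠ v) : G7.Adj u v := by
  rw [G7, SimpleGraph.fromRel_adj]
  exact ⟨hne, Or.inl h⟩

lemma G7_nadj (u v : Fin 7)
    (h : ({u, v} : Finset (Fin 7)) ∈
      ({{0, 1}, {0, 2}, {1, 2}, {3, 6}, {4, 6}, {5, 6}} : Finset (Finset (Fin 7)))) :
    ¬ G7.Adj u v := by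
  rw [G7, SimpleGraph.fromRel_adj]
  rintro ⟨hne, h' | h'⟩
  · exact h' h
  · rw [Finset.pair_comm v u] at h'
    exact h' h


/-- There is no `M ∈ 𝓜(G7)` of corank `5 = μ(G7)` having the all-ones vector as
an eigenvector; that is, no optimal CdV matrix for `G7` has `𝟙` as its
Perron–Frobenius eigenvector. -/
theorem no_all_ones_eigenvector :
    ¬∃ M : Matrix (Fin 7) (Fin 7) ℝ,
      InMG G7 M ∧
      Module.finrank ℝ (LinearMap.ker M.mulVecLin) = 5 ∧
      ∃ μ : ℝ, M.mulVec (fun _ => 1) = μ • (fun _ => (1 : ℝ)) := by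
  rintro ⟨M, ⟨hsym, hadj, hnadj, hM, hneg⟩, hker, μ, hμ⟩
  -- rank of M is 2
  have hrank : M.rank = 2 := by
    have h := LinearMap.finrank_range_add_finrank_ker M.mulVecLin
    rw [hker, Module.finrank_fin_fun] at h
    unfold Matrix.rank
    omega
  -- eigenvalue structure: one negative, one positive, five zero
  classical
  have hcard2 : (Finset.univ.filter fun i => hM.eigenvalues i ≠ 0).card = 2 := by
    have h := hM.rank_eq_card_non_zero_eigs
    rw [hrank, Fintype.card_subtype] at h
    omega
  have hsplit : (Finset.univ.filter fun i => hM.eigenvalues i ≠ 0)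
      = (Finset.univ.filter fun i => hM.eigenvalues i < 0)
        ∪ (Finset.univ.filter fun i => 0 < hM.eigenvalues i) := by
    ext k
    simp only [Finset.mem_filter, Finset.mem_union, Finset.mem_univ, true_and]
    constructor
    · exact fun h => h.lt_or_gt
    · rintro (h | h)
      · exact h.ne
      · exact h.ne'
  have hdisj : Disjoint (Finset.univ.filter fun i => hM.eigenvalues i < 0)
      (Finset.univ.filter fun i => 0 < hM.eigenvalues i) := by
    rw [Finset.disjoint_left]
    intro k h1 h2
    simp only [Finset.mem_filter] at h1 h2
    linarith [h1.2, h2.2]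
  have hcpos : (Finset.univ.filter fun i => 0 < hM.eigenvalues i).card = 1 := by
    have h := Finset.card_union_of_disjoint hdisj
    rw [← hsplit, hcard2, hneg] at h
    omega
  obtain ⟨i, hi⟩ := Finset.card_eq_one.mp hneg
  obtain ⟨j, hj⟩ := Finset.card_eq_one.mp hcpos
  have hiev : hM.eigenvalues i < 0 := by
    have h : i ∈ Finset.univ.filter fun k => hM.eigenvalues k < 0 := by
      rw [hi]; exact Finset.mem_singleton_self i
    exact (Finset.mem_filter.mp h).2
  have hjev : 0 < hM.eigenvalues j := by
    have h : j ∈ Finset.univ.filter fun k => 0 < hM.eigenvalues k := by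
      rw [hj]; exact Finset.mem_singleton_self j
    exact (Finset.mem_filter.mp h).2
  have hij : i ≠ j := by intro h; rw [h] at hiev; linarith
  have hzero : ∀ k, k ≠ i → k ≠ j → hM.eigenvalues k = 0 := by
    intro k hki hkj
    by_contra h
    have hk : k ∈ Finset.univ.filter fun l => hM.eigenvalues l ≠ 0 :=
      Finset.mem_filter.mpr ⟨Finset.mem_univ _, h⟩
    rw [hsplit, Finset.mem_union, hi, hj, Finset.mem_singleton, Finset.mem_singleton] at hk
    tauto
  -- spectral decomposition, entrywise
  set U : Matrix (Fin 7) (Fin 7) ℝ := (hM.eigenvectorUnitary : Matrix (Fin 7) (Fin 7) ℝ)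
    with hUdef
  have hspec : ∀ a b, M a b = ∑ k, hM.eigenvalues k * (U a k * U b k) := by
    intro a b
    conv_lhs => rw [hM.spectral_theorem, Unitary.conjStarAlgAut_apply]
    rw [Matrix.mul_apply]
    simp only [Matrix.mul_diagonal, Matrix.star_apply, star_trivial, Function.comp_apply,
      RCLike.ofReal_real_eq_id, id_eq, hUdef]
    exact Finset.sum_congr rfl fun k _ => by ring
  have hUU : star U * U = 1 := Matrix.mem_unitaryGroup_iff'.mp hM.eigenvectorUnitary.2
  have horth : ∑ a, U a i * U a j = 0 := by
    have h : (star U * U) i j = (1 : Matrix (Fin 7) (Fin 7) ℝ) i j := by rw [hUU]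
    rw [Matrix.mul_apply, Matrix.one_apply_ne hij] at h
    rw [← h]
    exact Finset.sum_congr rfl fun k _ => by rw [Matrix.star_apply, star_trivial]
  have hni : ∑ a, U a i * U a i = 1 := by
    have h : (star U * U) i i = (1 : Matrix (Fin 7) (Fin 7) ℝ) i i := by rw [hUU]
    rw [Matrix.mul_apply, Matrix.one_apply_eq] at h
    rw [← h]
    exact Finset.sum_congr rfl fun k _ => by rw [Matrix.star_apply, star_trivial]
  have hnj : ∑ a, U a j * U a j = 1 := by
    have h : (star U * U) j j = (1 : Matrix (Fin 7) (Fin 7) ℝ) j j := by rw [hUU]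
    rw [Matrix.mul_apply, Matrix.one_apply_eq] at h
    rw [← h]
    exact Finset.sum_congr rfl fun k _ => by rw [Matrix.star_apply, star_trivial]
  set sj : ℝ := Real.sqrt (hM.eigenvalues j) with hsjdef
  set si : ℝ := Real.sqrt (-hM.eigenvalues i) with hsidef
  have hsj : sj * sj = hM.eigenvalues j := Real.mul_self_sqrt hjev.le
  have hsi : si * si = -hM.eigenvalues i := Real.mul_self_sqrt (by linarith)
  have hdec : ∀ a b, M a b = (sj * U a j) * (sj * U b j) - (si * U a i) * (si * U b i) := by
    intro a b
    rw [hspec a b]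
    have hss : ∑ k, hM.eigenvalues k * (U a k * U b k)
        = ∑ k ∈ ({i, j} : Finset (Fin 7)), hM.eigenvalues k * (U a k * U b k) := by
      symm
      apply Finset.sum_subset (Finset.subset_univ _)
      intro k _ hk
      simp only [Finset.mem_insert, Finset.mem_singleton] at hk
      push_neg at hk
      rw [hzero k hk.1 hk.2, zero_mul]
    rw [hss, Finset.sum_pair hij]
    linear_combination (U a i * U b i) * hsi - (U a j * U b j) * hsj
  -- hypotheses of the key lemma
  have hxy : ∑ a, (sj * U a j) * (si * U a i) = 0 := by
    have h : ∑ a, (sj * U a j) * (si * U a i) = (sj * si) * ∑ a, U a i * U a j := by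
      rw [Finset.mul_sum]
      exact Finset.sum_congr rfl fun a _ => by ring
    rw [h, horth, mul_zero]
  have hx : 0 < ∑ a, (sj * U a j) * (sj * U a j) := by
    have h : ∑ a, (sj * U a j) * (sj * U a j) = (sj * sj) * ∑ a, U a j * U a j := by
      rw [Finset.mul_sum]
      exact Finset.sum_congr rfl fun a _ => by ring
    rw [h, hnj, mul_one, hsj]
    exact hjev
  have hy : 0 < ∑ a, (si * U a i) * (si * U a i) := by
    have h : ∑ a, (si * U a i) * (si * U a i) = (si * si) * ∑ a, U a i * U a i := by
      rw [Finset.mul_sum]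
      exact Finset.sum_congr rfl fun a _ => by ring
    rw [h, hni, mul_one, hsi]
    linarith
  have heig : ∀ a, (∑ b, sj * U b j) * (sj * U a j) - (∑ b, si * U b i) * (si * U a i) = μ := by
    intro a
    have h1 := congrFun hμ a
    simp only [Matrix.mulVec, dotProduct, mul_one, Pi.smul_apply, smul_eq_mul] at h1
    have h2 : ∑ b, M a b
        = ∑ b, ((sj * U a j) * (sj * U b j) - (si * U a i) * (si * U b i)) :=
      Finset.sum_congr rfl fun b _ => hdec a b
    have hsum1 : (∑ b, sj * U b j) * (sj * U a j) = ∑ b, (sj * U a j) * (sj * U b j) := by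
      rw [Finset.sum_mul]
      exact Finset.sum_congr rfl fun b _ => by ring
    have hsum2 : (∑ b, si * U b i) * (si * U a i) = ∑ b, (si * U a i) * (si * U b i) := by
      rw [Finset.sum_mul]
      exact Finset.sum_congr rfl fun b _ => by ring
    rw [hsum1, hsum2, ← Finset.sum_sub_distrib, ← h2]
    exact h1
  have hML : ∀ u v : Fin 7, G7.Adj u v →
      (sj * U u j) * (sj * U v j) < (si * U u i) * (si * U v i) := by
    intro u v huv
    have h := hadj u v huv
    rw [hdec u v] at h
    linarith
  have hME : ∀ u v : Fin 7, u ≠ v → ¬G7.Adj u v →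
      (sj * U u j) * (sj * U v j) = (si * U u i) * (si * U v i) := by
    intro u v hne huv
    have h := hnadj u v hne huv
    rw [hdec u v] at h
    linarith
  exact key_lemma (fun a => sj * U a j) (fun a => si * U a i) μ hxy hx hy heig
    (hME 0 1 (by decide) (G7_nadj 0 1 (by decide)))
    (hME 0 2 (by decide) (G7_nadj 0 2 (by decide)))
    (hME 1 2 (by decide) (G7_nadj 1 2 (by decide)))
    (hME 3 6 (by decide) (G7_nadj 3 6 (by decide)))
    (hME 4 6 (by decide) (G7_nadj 4 6 (by decide)))
    (hME 5 6 (by decide) (G7_nadj 5 6 (by decide)))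
    (hML 0 3 (G7_adj 0 3 (by decide) (by decide)))
    (hML 0 4 (G7_adj 0 4 (by decide) (by decide)))
    (hML 0 5 (G7_adj 0 5 (by decide) (by decide)))
    (hML 0 6 (G7_adj 0 6 (by decide) (by decide)))
    (hML 1 3 (G7_adj 1 3 (by decide) (by decide)))
    (hML 2 3 (G7_adj 2 3 (by decide) (by decide)))
    (hML 3 4 (G7_adj 3 4 (by decide) (by decide)))
end

section
/- For every t ∈ ℕ with t ≥ 4, there exists a matrix M ∈ 𝓜(K_{1,t}) with dim ker(M) = 3 that does not satisfy the Strong Arnold Property; that is, there exists a non-zero symmetric matrix X with MX = 0 and X_{uv} = 0 whenever uv is an edge of K_{1,t} or u = v. -/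
open Matrix

noncomputable section StarAux

/-- The matrix witnessing the theorem. -/
def Mstar (t : ℕ) : Matrix (Fin 1 ⊕ Fin t) (Fin 1 ⊕ Fin t) ℝ :=
  Matrix.of fun u v =>
    match u, v with
    | Sum.inl _, Sum.inl _ => 0
    | Sum.inl _, Sum.inr _ => -1
    | Sum.inr _, Sum.inl _ => -1
    | Sum.inr i, Sum.inr j => if i = j then (if (i : ℕ) < 4 then 0 else 1) else 0

variable {t : ℕ}

lemma Mstar_mulVec_inl (x : Fin 1 ⊕ Fin t → ℝ) (a : Fin 1) :
    (Mstar t *ᵥ x) (Sum.inl a) = -∑ j : Fin t, x (Sum.inr j) := by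
  simp [Mstar, mulVec, dotProduct, Fintype.sum_sum_type]

lemma Mstar_mulVec_inr (x : Fin 1 ⊕ Fin t → ℝ) (i : Fin t) :
    (Mstar t *ᵥ x) (Sum.inr i)
      = -x (Sum.inl 0) + (if (i : ℕ) < 4 then 0 else 1) * x (Sum.inr i) := by
  simp [Mstar, mulVec, dotProduct, Fintype.sum_sum_type, ite_mul, Finset.sum_ite_eq]

lemma Mstar_col_sub {a b : Fin t} (ha : (a : ℕ) < 4) (hb : (b : ℕ) < 4) :
    Mstar t *ᵥ (Pi.single (Sum.inr a) 1 - Pi.single (Sum.inr b) 1) = 0 := by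
  funext u
  rw [mulVec_sub]
  simp only [mulVec_single, Pi.sub_apply, Pi.zero_apply, mul_one]
  cases u with
  | inl a0 => simp [Mstar]
  | inr i =>
      simp only [Mstar, Matrix.of_apply, Pi.smul_apply, op_smul_eq_mul, col_apply, mul_one]
      split_ifs <;> simp_all <;> omega

lemma Mstar_q_nonneg (x : Fin 1 ⊕ Fin t → ℝ) (hx : x (Sum.inl 0) = 0) :
    0 ≤ x ⬝ᵥ (Mstar t *ᵥ x) := by
  have h : x ⬝ᵥ (Mstar t *ᵥ x)
      = ∑ i : Fin t, (if (i : ℕ) < 4 then 0 else 1) * x (Sum.inr i) ^ 2 := by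
    rw [dotProduct, Fintype.sum_sum_type]
    have h1 : ∀ a : Fin 1, x (Sum.inl a) * (Mstar t *ᵥ x) (Sum.inl a) = 0 := by
      intro a
      have : a = 0 := Subsingleton.elim _ _
      rw [this, hx, zero_mul]
    rw [Finset.sum_congr rfl fun a _ => h1 a]
    simp only [Finset.sum_const_zero, zero_add]
    refine Finset.sum_congr rfl fun i _ => ?_
    rw [Mstar_mulVec_inr x i, hx]
    ring
  rw [h]
  refine Finset.sum_nonneg fun i _ => ?_
  split_ifs <;> positivity

open scoped Classical in
lemma Mstar_negcount (ht : 4 ≤ t) (hM : (Mstar t).IsHermitian) :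
    (Finset.univ.filter fun i => hM.eigenvalues i < 0).card = 1 := by
  set B := hM.eigenvectorBasis with hB
  have hBdot : ∀ i j, (B i : Fin 1 ⊕ Fin t → ℝ) ⬝ᵥ (B j : Fin 1 ⊕ Fin t → ℝ)
      = if i = j then 1 else 0 := by
    intro i j
    have h := orthonormal_iff_ite.mp B.orthonormal i j
    rw [EuclideanSpace.inner_eq_star_dotProduct] at h
    rw [dotProduct_comm]
    simpa using h
  have hvec : ∀ i, Mstar t *ᵥ (B i : Fin 1 ⊕ Fin t → ℝ)
      = hM.eigenvalues i • (B i : Fin 1 ⊕ Fin t → ℝ) := fun i => hM.mulVec_eigenvectorBasis i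
  have hub_ne : ∀ i, hM.eigenvalues i < 0 → (B i : Fin 1 ⊕ Fin t → ℝ) (Sum.inl 0) ≠ 0 := by
    intro i hi h0
    have hq := Mstar_q_nonneg (B i : Fin 1 ⊕ Fin t → ℝ) h0
    rw [hvec i] at hq
    rw [dotProduct_smul, smul_eq_mul, hBdot i i, if_pos rfl, mul_one] at hq
    linarith
  have hex : ∃ i, hM.eigenvalues i < 0 := by
    by_contra hc
    push_neg at hc
    have hpsd := hM.posSemidef_iff_eigenvalues_nonneg.mpr (fun i => hc i)
    set x : Fin 1 ⊕ Fin t → ℝ :=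
      Pi.single (Sum.inl 0) 1 + Pi.single (Sum.inr (⟨0, by omega⟩ : Fin t)) 1 with hx
    have hge := hpsd.dotProduct_mulVec_nonneg x
    have hval : star x ⬝ᵥ (Mstar t *ᵥ x) = -2 := by
      rw [star_trivial]
      simp [hx, mulVec_add, mulVec_single, add_dotProduct, single_dotProduct, Mstar]
      norm_num
    rw [hval] at hge
    norm_num at hge
  have hle : (Finset.univ.filter fun i => hM.eigenvalues i < 0).card ≤ 1 := by
    refine Finset.card_le_one.mpr fun i hi j hj => ?_
    by_contra hij
    rw [Finset.mem_filter] at hi hj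
    have hi' := hi.2
    have hj' := hj.2
    set c : ℝ := (B j : Fin 1 ⊕ Fin t → ℝ) (Sum.inl 0) with hc
    set e : ℝ := (B i : Fin 1 ⊕ Fin t → ℝ) (Sum.inl 0) with he
    set y : Fin 1 ⊕ Fin t → ℝ := fun k => c * B i k - e * B j k with hy
    have hy0 : y (Sum.inl 0) = 0 := by
      rw [hy]; dsimp only; rw [← hc, ← he]; ring
    have hq := Mstar_q_nonneg y hy0
    have hMy : ∀ u, (Mstar t *ᵥ y) u
        = c * hM.eigenvalues i * B i u - e * hM.eigenvalues j * B j u := by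
      intro u
      have h1 : (∑ v, Mstar t u v * B i v) = hM.eigenvalues i * B i u :=
        congrFun (hvec i) u
      have h2 : (∑ v, Mstar t u v * B j v) = hM.eigenvalues j * B j u :=
        congrFun (hvec j) u
      calc (Mstar t *ᵥ y) u = ∑ v, Mstar t u v * (c * B i v - e * B j v) := rfl
        _ = c * (∑ v, Mstar t u v * B i v) - e * (∑ v, Mstar t u v * B j v) := by
            rw [Finset.mul_sum, Finset.mul_sum, ← Finset.sum_sub_distrib]
            all_goals exact Finset.sum_congr rfl fun v _ => by ring
        _ = _ := by rw [h1, h2]; ring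
    have hs1 : (∑ u, y u * B i u) = c := by
      have d1 : (∑ u, (B i : Fin 1 ⊕ Fin t → ℝ) u * B i u) = 1 := by
        have := hBdot i i; rw [if_pos rfl] at this; exact this
      have d2 : (∑ u, (B j : Fin 1 ⊕ Fin t → ℝ) u * B i u) = 0 := by
        have := hBdot j i; rw [if_neg (Ne.symm hij)] at this; exact this
      calc (∑ u, y u * B i u) = ∑ u, (c * B i u * B i u - e * (B j u * B i u)) := by
            exact Finset.sum_congr rfl fun u _ => by rw [hy]; ring
        _ = c * (∑ u, (B i : Fin 1 ⊕ Fin t → ℝ) u * B i u)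
            - e * (∑ u, (B j : Fin 1 ⊕ Fin t → ℝ) u * B i u) := by
            rw [Finset.mul_sum, Finset.mul_sum, ← Finset.sum_sub_distrib]
            all_goals exact Finset.sum_congr rfl fun u _ => by ring
        _ = c := by rw [d1, d2]; ring
    have hs2 : (∑ u, y u * B j u) = -e := by
      have d1 : (∑ u, (B j : Fin 1 ⊕ Fin t → ℝ) u * B j u) = 1 := by
        have := hBdot j j; rw [if_pos rfl] at this; exact this
      have d2 : (∑ u, (B i : Fin 1 ⊕ Fin t → ℝ) u * B j u) = 0 := by
        have := hBdot i j; rw [if_neg hij] at this; exact this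
      calc (∑ u, y u * B j u) = ∑ u, (c * (B i u * B j u) - e * (B j u * B j u)) := by
            exact Finset.sum_congr rfl fun u _ => by rw [hy]; ring
        _ = c * (∑ u, (B i : Fin 1 ⊕ Fin t → ℝ) u * B j u)
            - e * (∑ u, (B j : Fin 1 ⊕ Fin t → ℝ) u * B j u) := by
            rw [Finset.mul_sum, Finset.mul_sum, ← Finset.sum_sub_distrib]
            all_goals exact Finset.sum_congr rfl fun u _ => by ring
        _ = -e := by rw [d1, d2]; ring
    have hqval : y ⬝ᵥ (Mstar t *ᵥ y)
        = c ^ 2 * hM.eigenvalues i + e ^ 2 * hM.eigenvalues j := by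
      calc y ⬝ᵥ (Mstar t *ᵥ y) = ∑ u, y u * (Mstar t *ᵥ y) u := rfl
        _ = ∑ u, (c * hM.eigenvalues i * (y u * B i u)
              - e * hM.eigenvalues j * (y u * B j u)) := by
            exact Finset.sum_congr rfl fun u _ => by rw [hMy u]; ring
        _ = c * hM.eigenvalues i * (∑ u, y u * B i u)
            - e * hM.eigenvalues j * (∑ u, y u * B j u) := by
            rw [Finset.mul_sum, Finset.mul_sum, ← Finset.sum_sub_distrib]
        _ = _ := by rw [hs1, hs2]; ring
    rw [hqval] at hq
    have hcne : c ≠ 0 := hub_ne j hj'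
    have hene : e ≠ 0 := hub_ne i hi'
    have h1 : c ^ 2 > 0 := by positivity
    have h2 : e ^ 2 > 0 := by positivity
    nlinarith
  obtain ⟨i, hi⟩ := hex
  have hpos : 0 < (Finset.univ.filter fun i => hM.eigenvalues i < 0).card :=
    Finset.card_pos.mpr ⟨i, by simp [hi]⟩
  omega

lemma Mstar_finrank_ker (ht : 4 ≤ t) :
    Module.finrank ℝ (LinearMap.ker (Mstar t).mulVecLin) = 3 := by
  obtain ⟨a0, ha0⟩ : ∃ a : Fin t, (a : ℕ) = 0 := ⟨⟨0, by omega⟩, rfl⟩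
  obtain ⟨a1, ha1⟩ : ∃ a : Fin t, (a : ℕ) = 1 := ⟨⟨1, by omega⟩, rfl⟩
  obtain ⟨a2, ha2⟩ : ∃ a : Fin t, (a : ℕ) = 2 := ⟨⟨2, by omega⟩, rfl⟩
  obtain ⟨a3, ha3⟩ : ∃ a : Fin t, (a : ℕ) = 3 := ⟨⟨3, by omega⟩, rfl⟩
  set w : Fin 3 → (Fin 1 ⊕ Fin t → ℝ) :=
    ![Pi.single (Sum.inr a1) 1 - Pi.single (Sum.inr a0) 1,
      Pi.single (Sum.inr a2) 1 - Pi.single (Sum.inr a0) 1,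
      Pi.single (Sum.inr a3) 1 - Pi.single (Sum.inr a0) 1] with hw
  have hwker : ∀ k : Fin 3, Mstar t *ᵥ w k = 0 := by
    intro k
    fin_cases k
    · exact Mstar_col_sub (by omega) (by omega)
    · exact Mstar_col_sub (by omega) (by omega)
    · exact Mstar_col_sub (by omega) (by omega)
  have hker : LinearMap.ker (Mstar t).mulVecLin = Submodule.span ℝ (Set.range w) := by
    apply le_antisymm
    · intro x hx
      rw [LinearMap.mem_ker] at hx
      have hx' : Mstar t *ᵥ x = 0 := hx
      have h0 : x (Sum.inl 0) = 0 := by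
        have h := congrFun hx' (Sum.inr a0)
        rw [Mstar_mulVec_inr, if_pos (by omega)] at h
        simpa using h
      have h4 : ∀ i : Fin t, ¬((i : ℕ) < 4) → x (Sum.inr i) = 0 := by
        intro i hi
        have h := congrFun hx' (Sum.inr i)
        rw [Mstar_mulVec_inr, h0, if_neg hi] at h
        simpa using h
      have hsum : ∑ j : Fin t, x (Sum.inr j) = 0 := by
        have h := congrFun hx' (Sum.inl 0)
        rw [Mstar_mulVec_inl] at h
        simpa using h
      have hsum4 : x (Sum.inr a0) + x (Sum.inr a1) + x (Sum.inr a2)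
          + x (Sum.inr a3) = 0 := by
        have heq : ∑ j ∈ ({a0, a1, a2, a3} : Finset (Fin t)), x (Sum.inr j)
            = ∑ j : Fin t, x (Sum.inr j) := by
          refine Finset.sum_subset (Finset.subset_univ _) fun j _ hj => ?_
          refine h4 j fun hlt => hj ?_
          simp only [Finset.mem_insert, Finset.mem_singleton]
          have hj4 : (j : ℕ) = 0 ∨ (j : ℕ) = 1 ∨ (j : ℕ) = 2 ∨ (j : ℕ) = 3 := by omega
          rcases hj4 with h | h | h | h
          · exact Or.inl (Fin.ext (by omega))
          · exact Or.inr (Or.inl (Fin.ext (by omega)))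
          · exact Or.inr (Or.inr (Or.inl (Fin.ext (by omega))))
          · exact Or.inr (Or.inr (Or.inr (Fin.ext (by omega))))
        rw [hsum] at heq
        have hne0 : a0 ∉ ({a1, a2, a3} : Finset (Fin t)) := by
          simp only [Finset.mem_insert, Finset.mem_singleton, Fin.ext_iff]
          omega
        have hne1 : a1 ∉ ({a2, a3} : Finset (Fin t)) := by
          simp only [Finset.mem_insert, Finset.mem_singleton, Fin.ext_iff]
          omega
        have hne2 : a2 ∉ ({a3} : Finset (Fin t)) := by
          simp only [Finset.mem_singleton, Fin.ext_iff]
          omega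
        rw [Finset.sum_insert hne0, Finset.sum_insert hne1, Finset.sum_insert hne2,
          Finset.sum_singleton] at heq
        linarith
      have hxeq : x = x (Sum.inr a1) • w 0 + x (Sum.inr a2) • w 1
          + x (Sum.inr a3) • w 2 := by
        funext u
        cases u with
        | inl a =>
          have ha : a = 0 := Subsingleton.elim _ _
          subst ha
          simp only [Pi.add_apply, Pi.smul_apply, hw, Pi.sub_apply, smul_eq_mul,
            Matrix.cons_val_zero, Matrix.cons_val_one, Matrix.head_cons,
            Matrix.cons_val_two, Matrix.tail_cons]
          rw [h0]
          simp [Pi.single_apply]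
        | inr m =>
          simp only [Pi.add_apply, Pi.smul_apply, hw, Pi.sub_apply, smul_eq_mul,
            Matrix.cons_val_zero, Matrix.cons_val_one, Matrix.head_cons,
            Matrix.cons_val_two, Matrix.tail_cons, Pi.single_apply, Sum.inr.injEq]
          by_cases hm0 : (m : ℕ) = 0
          · obtain rfl : m = a0 := Fin.ext (by omega)
            simp only [Fin.ext_iff, ha0, ha1, ha2, ha3]
            norm_num
            try linarith
          · by_cases hm1 : (m : ℕ) = 1
            · obtain rfl : m = a1 := Fin.ext (by omega)
              simp only [Fin.ext_iff, ha0, ha1, ha2, ha3]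
              norm_num
              try linarith
            · by_cases hm2 : (m : ℕ) = 2
              · obtain rfl : m = a2 := Fin.ext (by omega)
                simp only [Fin.ext_iff, ha0, ha1, ha2, ha3]
                norm_num
                try linarith
              · by_cases hm3 : (m : ℕ) = 3
                · obtain rfl : m = a3 := Fin.ext (by omega)
                  simp only [Fin.ext_iff, ha0, ha1, ha2, ha3]
                  norm_num
                  try linarith
                · rw [h4 m (by omega)]
                  simp only [Fin.ext_iff, ha0, ha1, ha2, ha3, hm0, hm1, hm2, hm3]
                  norm_num
                  try linarith
      rw [hxeq]
      refine Submodule.add_mem _ (Submodule.add_mem _ ?_ ?_) ?_ <;>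
        exact Submodule.smul_mem _ _ (Submodule.subset_span ⟨_, rfl⟩)
    · rw [Submodule.span_le]
      rintro _ ⟨k, rfl⟩
      rw [SetLike.mem_coe, LinearMap.mem_ker]
      exact hwker k
  rw [hker]
  have hli : LinearIndependent ℝ w := by
    rw [Fintype.linearIndependent_iff]
    intro g hg
    have h1 := congrFun hg (Sum.inr a1)
    have h2 := congrFun hg (Sum.inr a2)
    have h3 := congrFun hg (Sum.inr a3)
    simp only [Finset.sum_apply, Fin.sum_univ_three, Pi.smul_apply, hw, Pi.sub_apply,
      Matrix.cons_val_zero, Matrix.cons_val_one, Matrix.head_cons,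
      Matrix.cons_val_two, Matrix.tail_cons,
      Pi.single_apply, Sum.inr.injEq, smul_eq_mul, Pi.zero_apply,
      Fin.ext_iff, ha0, ha1, ha2, ha3] at h1 h2 h3
    norm_num at h1 h2 h3
    intro k
    fin_cases k
    · exact h1
    · exact h2
    · exact h3
  rw [finrank_span_eq_card hli]
  simp

lemma Mstar_isSymm : (Mstar t).IsSymm := by
  ext u v
  rcases u with a | i <;> rcases v with b | j <;>
    simp only [Mstar, transpose_apply, Matrix.of_apply]
  rcases eq_or_ne i j with rfl | h
  · rfl
  · rw [if_neg h, if_neg (Ne.symm h)]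

lemma Mstar_isHermitian : (Mstar t).IsHermitian := by
  show (Mstar t)ᴴ = Mstar t
  rw [conjTranspose_eq_transpose_of_trivial]
  exact Mstar_isSymm

end StarAux

open scoped Classical in
theorem star_corank_three_no_SAP' (t : ℕ) (ht : 4 ≤ t) :
    ∃ M : Matrix (Fin 1 ⊕ Fin t) (Fin 1 ⊕ Fin t) ℝ,
      (M.IsSymm ∧
      (∀ u v, (completeBipartiteGraph (Fin 1) (Fin t)).Adj u v → M u v < 0) ∧
      (∀ u v, u ≠ v → ¬(completeBipartiteGraph (Fin 1) (Fin t)).Adj u v → M u v = 0) ∧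
      ∃ hM : M.IsHermitian,
        (Finset.univ.filter fun i => hM.eigenvalues i < 0).card = 1) ∧
      Module.finrank ℝ (LinearMap.ker M.mulVecLin) = 3 ∧
      ∃ X : Matrix (Fin 1 ⊕ Fin t) (Fin 1 ⊕ Fin t) ℝ,
        X ≠ 0 ∧ X.IsSymm ∧ M * X = 0 ∧
        (∀ u v, (completeBipartiteGraph (Fin 1) (Fin t)).Adj u v → X u v = 0) ∧
        (∀ u, X u u = 0) := by
  obtain ⟨a0, ha0⟩ : ∃ a : Fin t, (a : ℕ) = 0 := ⟨⟨0, by omega⟩, rfl⟩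
  obtain ⟨a1, ha1⟩ : ∃ a : Fin t, (a : ℕ) = 1 := ⟨⟨1, by omega⟩, rfl⟩
  obtain ⟨a2, ha2⟩ : ∃ a : Fin t, (a : ℕ) = 2 := ⟨⟨2, by omega⟩, rfl⟩
  obtain ⟨a3, ha3⟩ : ∃ a : Fin t, (a : ℕ) = 3 := ⟨⟨3, by omega⟩, rfl⟩
  set uu : Fin 1 ⊕ Fin t → ℝ :=
    Pi.single (Sum.inr a0) 1 - Pi.single (Sum.inr a1) 1 with huu
  set vv : Fin 1 ⊕ Fin t → ℝ :=
    Pi.single (Sum.inr a2) 1 - Pi.single (Sum.inr a3) 1 with hvv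
  have hu : Mstar t *ᵥ uu = 0 := Mstar_col_sub (by omega) (by omega)
  have hv : Mstar t *ᵥ vv = 0 := Mstar_col_sub (by omega) (by omega)
  have huinl : ∀ a : Fin 1, uu (Sum.inl a) = 0 := by
    intro a; simp [huu, Pi.single_apply]
  have hvinl : ∀ a : Fin 1, vv (Sum.inl a) = 0 := by
    intro a; simp [hvv, Pi.single_apply]
  refine ⟨Mstar t, ⟨Mstar_isSymm, ?_, ?_, Mstar_isHermitian, Mstar_negcount ht _⟩,
    Mstar_finrank_ker ht,
    Matrix.of (fun p q => uu p * vv q + vv p * uu q), ?_, ?_, ?_, ?_, ?_⟩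
  · intro u v huv
    rcases u with a | i <;> rcases v with b | j <;>
      simp only [completeBipartiteGraph_adj] at huv <;>
      simp [Mstar] at huv ⊢
  · intro u v hne hadj
    rcases u with a | i <;> rcases v with b | j
    · exact absurd (congrArg Sum.inl (Subsingleton.elim a b)) hne
    · exact absurd (by simp) hadj
    · exact absurd (by simp) hadj
    · have hij : i ≠ j := fun h => hne (by rw [h])
      simp only [Mstar, Matrix.of_apply]
      rw [if_neg hij]
  · intro h
    have h2 := congrFun (congrFun h (Sum.inr a0)) (Sum.inr a2)
    simp only [Matrix.of_apply, Matrix.zero_apply, huu, hvv, Pi.sub_apply,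
      Pi.single_apply, Sum.inr.injEq, Fin.ext_iff, ha0, ha1, ha2, ha3] at h2
    norm_num at h2
  · ext p q
    simp only [Matrix.of_apply, transpose_apply]
    ring
  · ext p q
    rw [Matrix.mul_apply]
    have : ∀ r, Mstar t p r * (Matrix.of (fun p q => uu p * vv q + vv p * uu q) r q)
        = Mstar t p r * uu r * vv q + Mstar t p r * vv r * uu q := by
      intro r; simp only [Matrix.of_apply]; ring
    rw [Finset.sum_congr rfl fun r _ => this r, Finset.sum_add_distrib,
      ← Finset.sum_mul, ← Finset.sum_mul]
    have h1 : (∑ r, Mstar t p r * uu r) = 0 := congrFun hu p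
    have h2 : (∑ r, Mstar t p r * vv r) = 0 := congrFun hv p
    rw [h1, h2]
    simp
  · intro u v huv
    rcases u with a | i <;> rcases v with b | j
    · simp at huv
    · simp only [Matrix.of_apply]; rw [huinl a, hvinl a]; ring
    · simp only [Matrix.of_apply]; rw [huinl b, hvinl b]; ring
    · simp at huv
  · intro u
    rcases u with a | m
    · simp only [Matrix.of_apply]
      rw [huinl a, hvinl a]; ring
    · simp only [Matrix.of_apply]
      have : uu (Sum.inr m) * vv (Sum.inr m) = 0 := by
        by_cases hm01 : (m : ℕ) = 0 ∨ (m : ℕ) = 1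
        · have h2 : ¬(m = a2) := by rw [Fin.ext_iff]; omega
          have h3 : ¬(m = a3) := by rw [Fin.ext_iff]; omega
          have : vv (Sum.inr m) = 0 := by
            simp [hvv, Pi.single_apply, Sum.inr.injEq, h2, h3]
          rw [this]; ring
        · have h0 : ¬(m = a0) := by rw [Fin.ext_iff]; omega
          have h1 : ¬(m = a1) := by rw [Fin.ext_iff]; omega
          have : uu (Sum.inr m) = 0 := by
            simp [huu, Pi.single_apply, Sum.inr.injEq, h0, h1]
          rw [this]; ring
      rw [mul_comm (vv (Sum.inr m))]
      linarith [this]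

/-- For every `t ≥ 4` there is `M ∈ 𝓜(K_{1,t})` of corank `3` that does not
satisfy the Strong Arnold Property. -/
theorem star_corank_three_no_SAP (t : ℕ) (ht : 4 ≤ t) :
    ∃ M : Matrix (Fin 1 ⊕ Fin t) (Fin 1 ⊕ Fin t) ℝ,
      InMG (completeBipartiteGraph (Fin 1) (Fin t)) M ∧
      Module.finrank ℝ (LinearMap.ker M.mulVecLin) = 3 ∧
      ∃ X : Matrix (Fin 1 ⊕ Fin t) (Fin 1 ⊕ Fin t) ℝ,
        X ≠ 0 ∧ X.IsSymm ∧ M * X = 0 ∧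
        (∀ u v, (completeBipartiteGraph (Fin 1) (Fin t)).Adj u v → X u v = 0) ∧
        (∀ u, X u u = 0) := by
  obtain ⟨M, h1, h2, h3⟩ := star_corank_three_no_SAP' t ht
  exact ⟨M, h1, h2, h3⟩
end
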